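/- arXiv:2009.05229 — 7 statements merged into one kernel-verified Lean document; each statement's English description precedes it below -/
import Mathlib

section
/- Let u = P_h u + 𝒟φ be the discrete Helmholtz–Hodge decomposition of u: Ω_h → ℝ³. Then ∑_{x∈Ω_h} |P_h u(x)|² ≤ ∑_{x∈Ω_h∖∂Ω_h} |u(x)|² and ∑_{x∈Ω_h∖∂Ω_h} |𝒟φ(x)|² ≤ ∑_{x∈Ω_h∖∂Ω_h} |u(x)|². In particular, the discrete Leray projection P_h is a contraction in the discrete L² norm. -/
open Finset Real

/-- Lattice points of the grid (indices; the physical point is `h • x`). -/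
abbrev Pt := Fin 3 → ℤ

/-- Standard basis vector of the lattice. -/
def ee (i : Fin 3) : Pt := fun j => if j = i then 1 else 0

/-- Central difference `D_i φ(x) = (φ(x+he^i) - φ(x-he^i))/(2h)`. -/
noncomputable def Dc (h : ℝ) (i : Fin 3) (φ : Pt → ℝ) (x : Pt) : ℝ :=
  (φ (x + ee i) - φ (x - ee i)) / (2 * h)

/-- Forward difference `D_i⁺ φ(x) = (φ(x+he^i) - φ(x))/h`. -/
noncomputable def Dp (h : ℝ) (i : Fin 3) (φ : Pt → ℝ) (x : Pt) : ℝ :=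
  (φ (x + ee i) - φ x) / h

/-- Second difference `D_i² φ(x) = (φ(x+he^i)+φ(x-he^i)-2φ(x))/h²`. -/
noncomputable def D2 (h : ℝ) (i : Fin 3) (φ : Pt → ℝ) (x : Pt) : ℝ :=
  (φ (x + ee i) + φ (x - ee i) - 2 * φ x) / h ^ 2

/-- Central-difference divergence `𝒟·u`. -/
noncomputable def divc (h : ℝ) (u : Pt → Fin 3 → ℝ) (x : Pt) : ℝ :=
  ∑ i, Dc h i (fun y => u y i) x

open scoped Classical in
/-- Discrete boundary `∂Ω_h = {x ∈ Ω_h : {x ± he^i} ⊄ Ω_h}`. -/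
noncomputable def bdry (Ω : Finset Pt) : Finset Pt :=
  Ω.filter (fun x => ∃ i : Fin 3, x + ee i ∉ Ω ∨ x - ee i ∉ Ω)

/-- Parity class (one of the eight classes G¹,…,G⁸) of a grid point. -/
def parity (x : Pt) : Fin 3 → ZMod 2 := fun i => (x i : ZMod 2)

open scoped Classical in
/-- The interior sub-grid `Ω_h^∘`. -/
noncomputable def circInt (Ω : Finset Pt) : Finset Pt :=
  (Ω \ bdry Ω).filter
    (fun x => ∀ a : Fin 3 → ℤ, (∀ i, 0 ≤ a i ∧ a i ≤ 2) → x + a ∈ Ω \ bdry Ω)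

open scoped Classical in
/-- The parity class `Ω_h^{∘j}` of the interior sub-grid. -/
noncomputable def circJ (Ω : Finset Pt) (p : Fin 3 → ZMod 2) : Finset Pt :=
  (circInt Ω).filter (fun x => parity x = p)

/-- **Contraction of the discrete Leray projection** (Theorem 2.4, first part):
if `u = P_h u + 𝒟φ` is the discrete Helmholtz–Hodge decomposition of `u` (here
`w = P_h u`), then `∑_{Ω_h}|P_h u|² ≤ ∑_{Ω_h∖∂Ω_h}|u|²` and
`∑_{Ω_h∖∂Ω_h}|𝒟φ|² ≤ ∑_{Ω_h∖∂Ω_h}|u|²`. -/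
theorem projection_contraction (h : ℝ) (hh : 0 < h) (Ω : Finset Pt)
    (u w : Pt → Fin 3 → ℝ) (φ : Pt → ℝ)
    (hw0 : ∀ x ∉ Ω, w x = 0) (hφ0 : ∀ x ∉ Ω, φ x = 0)
    (hdiv : ∀ x ∈ Ω, divc h w x = 0)
    (hdec : ∀ x ∈ Ω \ bdry Ω, ∀ i : Fin 3, w x i + Dc h i φ x = u x i)
    (hwb : ∀ x ∈ bdry Ω, w x = 0)
    (hmean : ∀ p : Fin 3 → ZMod 2, ∑ x ∈ circJ Ω p, φ x = 0) :
    (∑ x ∈ Ω, ∑ i, (w x i) ^ 2 ≤ ∑ x ∈ Ω \ bdry Ω, ∑ i, (u x i) ^ 2) ∧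
    (∑ x ∈ Ω \ bdry Ω, ∑ i, (Dc h i φ x) ^ 2 ≤ ∑ x ∈ Ω \ bdry Ω, ∑ i, (u x i) ^ 2) := by
  classical
  set S : Finset Pt := Ω ∪ Finset.univ.biUnion
      (fun i : Fin 3 => Ω.image (· + ee i) ∪ Ω.image (fun x => x - ee i)) with hS
  have hΩS : Ω ⊆ S := Finset.subset_union_left
  -- shift identities
  have keyA : ∀ i : Fin 3,
      (∑ x ∈ Ω, w x i * φ (x + ee i)) = ∑ y ∈ S, w (y - ee i) i * φ y := by
    intro i
    have hinj : Set.InjOn (· + ee i) Ω := fun a _ b _ hab => by simpa using hab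
    have h1 : (∑ y ∈ Ω.image (· + ee i), w (y - ee i) i * φ y)
        = ∑ x ∈ Ω, w (x + ee i - ee i) i * φ (x + ee i) :=
      Finset.sum_image (fun a ha b hb hab => hinj ha hb hab)
    have h2 : Ω.image (· + ee i) ⊆ S := by
      intro y hy
      refine Finset.mem_union_right _ (Finset.mem_biUnion.mpr ⟨i, Finset.mem_univ _, ?_⟩)
      exact Finset.mem_union_left _ hy
    have h3 : (∑ y ∈ Ω.image (· + ee i), w (y - ee i) i * φ y)
        = ∑ y ∈ S, w (y - ee i) i * φ y := by
      refine Finset.sum_subset h2 ?_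
      intro y _ hyn
      have : y - ee i ∉ Ω := fun hmem => hyn
        (Finset.mem_image.mpr ⟨y - ee i, hmem, by abel⟩)
      simp [hw0 _ this]
    rw [← h3, h1]
    simp [add_sub_cancel_right]
  have keyB : ∀ i : Fin 3,
      (∑ x ∈ Ω, w x i * φ (x - ee i)) = ∑ y ∈ S, w (y + ee i) i * φ y := by
    intro i
    have hinj : Set.InjOn (fun x => x - ee i) Ω := fun a _ b _ hab => by
      have : a - ee i = b - ee i := hab
      have := congrArg (· + ee i) this
      simpa using this
    have h1 : (∑ y ∈ Ω.image (fun x => x - ee i), w (y + ee i) i * φ y)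
        = ∑ x ∈ Ω, w (x - ee i + ee i) i * φ (x - ee i) :=
      Finset.sum_image (fun a ha b hb hab => hinj ha hb hab)
    have h2 : Ω.image (fun x => x - ee i) ⊆ S := by
      intro y hy
      refine Finset.mem_union_right _ (Finset.mem_biUnion.mpr ⟨i, Finset.mem_univ _, ?_⟩)
      exact Finset.mem_union_right _ hy
    have h3 : (∑ y ∈ Ω.image (fun x => x - ee i), w (y + ee i) i * φ y)
        = ∑ y ∈ S, w (y + ee i) i * φ y := by
      refine Finset.sum_subset h2 ?_
      intro y _ hyn
      have : y + ee i ∉ Ω := fun hmem => hyn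
        (Finset.mem_image.mpr ⟨y + ee i, hmem, by abel⟩)
      simp [hw0 _ this]
    rw [← h3, h1]
    simp [sub_add_cancel]
  -- cross term over Ω vanishes
  have crossΩ : (∑ x ∈ Ω, ∑ i, w x i * Dc h i φ x) = 0 := by
    have expand : (∑ x ∈ Ω, ∑ i, w x i * Dc h i φ x)
        = ∑ i, ((∑ x ∈ Ω, w x i * φ (x + ee i)) - ∑ x ∈ Ω, w x i * φ (x - ee i)) / (2 * h) := by
      rw [Finset.sum_comm]
      refine Finset.sum_congr rfl (fun i _ => ?_)
      rw [← Finset.sum_sub_distrib, Finset.sum_div]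
      refine Finset.sum_congr rfl (fun x _ => ?_)
      simp only [Dc]; ring
    rw [expand]
    have : ∀ i : Fin 3,
        ((∑ x ∈ Ω, w x i * φ (x + ee i)) - ∑ x ∈ Ω, w x i * φ (x - ee i)) / (2 * h)
        = ∑ y ∈ S, (w (y - ee i) i - w (y + ee i) i) / (2 * h) * φ y := by
      intro i
      rw [keyA, keyB, ← Finset.sum_sub_distrib, Finset.sum_div]
      refine Finset.sum_congr rfl (fun y _ => ?_)
      ring
    rw [Finset.sum_congr rfl (fun i _ => this i), Finset.sum_comm]
    have hzero : ∀ y ∈ S, (∑ i, (w (y - ee i) i - w (y + ee i) i) / (2 * h) * φ y) = 0 := by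
      intro y hy
      by_cases hyΩ : y ∈ Ω
      · have hd := hdiv y hyΩ
        have hd' : (∑ i, (w (y + ee i) i - w (y - ee i) i) / (2 * h)) = 0 := by
          simpa [divc, Dc] using hd
        have : (∑ i, (w (y - ee i) i - w (y + ee i) i) / (2 * h) * φ y)
            = -(∑ i, (w (y + ee i) i - w (y - ee i) i) / (2 * h)) * φ y := by
          rw [← Finset.sum_mul, ← Finset.sum_neg_distrib]
          congr 1
          refine Finset.sum_congr rfl (fun i _ => ?_)
          ring
        rw [this, hd', neg_zero, zero_mul]
      · simp [hφ0 y hyΩ]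
    exact Finset.sum_eq_zero hzero
  -- cross term over Ω \ bdry equals cross term over Ω
  have cross : (∑ x ∈ Ω \ bdry Ω, ∑ i, w x i * Dc h i φ x) = 0 := by
    rw [← crossΩ]
    refine Finset.sum_subset Finset.sdiff_subset ?_
    intro x hx hxn
    have hxb : x ∈ bdry Ω := by
      by_contra hc
      exact hxn (Finset.mem_sdiff.mpr ⟨hx, hc⟩)
    simp [hwb x hxb]
  -- Pythagoras
  have pyth : (∑ x ∈ Ω \ bdry Ω, ∑ i, (u x i) ^ 2)
      = (∑ x ∈ Ω \ bdry Ω, ∑ i, (w x i) ^ 2)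
        + (∑ x ∈ Ω \ bdry Ω, ∑ i, (Dc h i φ x) ^ 2) := by
    have : ∀ x ∈ Ω \ bdry Ω, (∑ i, (u x i) ^ 2)
        = (∑ i, (w x i) ^ 2) + 2 * (∑ i, w x i * Dc h i φ x)
          + (∑ i, (Dc h i φ x) ^ 2) := by
      intro x hx
      rw [Finset.mul_sum, ← Finset.sum_add_distrib, ← Finset.sum_add_distrib]
      refine Finset.sum_congr rfl (fun i _ => ?_)
      rw [← hdec x hx i]; ring
    rw [Finset.sum_congr rfl this, Finset.sum_add_distrib, Finset.sum_add_distrib,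
      ← Finset.mul_sum, cross]
    ring
  have hwsum : (∑ x ∈ Ω, ∑ i, (w x i) ^ 2) = ∑ x ∈ Ω \ bdry Ω, ∑ i, (w x i) ^ 2 := by
    symm
    refine Finset.sum_subset Finset.sdiff_subset ?_
    intro x hx hxn
    have hxb : x ∈ bdry Ω := by
      by_contra hc
      exact hxn (Finset.mem_sdiff.mpr ⟨hx, hc⟩)
    simp [hwb x hxb]
  have hwn : (0:ℝ) ≤ ∑ x ∈ Ω \ bdry Ω, ∑ i, (w x i) ^ 2 :=
    Finset.sum_nonneg fun x _ => Finset.sum_nonneg fun i _ => sq_nonneg _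
  have hdn : (0:ℝ) ≤ ∑ x ∈ Ω \ bdry Ω, ∑ i, (Dc h i φ x) ^ 2 :=
    Finset.sum_nonneg fun x _ => Finset.sum_nonneg fun i _ => sq_nonneg _
  constructor
  · rw [hwsum, pyth]; linarith
  · rw [pyth]; linarith
end

section
/- Let u: Ω_h → ℝ³ with u = 0 on (Ω_h ∖ Ω_h^∘) ∪ ∂Ω_h^∘, and let u = P_h u + 𝒟φ be its discrete Helmholtz–Hodge decomposition. Then ∑_{x∈Ω_h∖∂Ω_h} |u(x) - P_h u(x)|² ≤ Ã² ∑_{x∈Ω_h^∘} |𝒟·u(x)|², where Ã is the constant from the discrete Poincaré inequality with zero parity-class means. -/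
open Finset Real

open scoped Classical in
/-- Discrete boundary of the interior sub-grid `Ω_h^∘`. -/
noncomputable def bdryCirc (Ω : Finset Pt) : Finset Pt :=
  (circInt Ω).filter (fun x => ∃ i : Fin 3, x + ee i ∉ circInt Ω ∨ x - ee i ∉ circInt Ω)


section Aux

open scoped Classical

/-- A finite set containing `Ω` together with all its one-step shifts. -/
noncomputable def big (Ω : Finset Pt) : Finset Pt :=
  Ω.biUnion (fun x => insert x
    ((Finset.univ : Finset (Fin 3)).biUnion (fun i => {x + ee i, x - ee i})))

lemma subset_big (Ω : Finset Pt) : Ω ⊆ big Ω := by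
  intro x hx
  exact Finset.mem_biUnion.2 ⟨x, hx, Finset.mem_insert_self _ _⟩

lemma add_mem_big (Ω : Finset Pt) {x : Pt} (hx : x ∈ Ω) (i : Fin 3) :
    x + ee i ∈ big Ω := by
  refine Finset.mem_biUnion.2 ⟨x, hx, Finset.mem_insert_of_mem ?_⟩
  exact Finset.mem_biUnion.2 ⟨i, Finset.mem_univ _, by simp⟩

lemma sub_mem_big (Ω : Finset Pt) {x : Pt} (hx : x ∈ Ω) (i : Fin 3) :
    x - ee i ∈ big Ω := by
  refine Finset.mem_biUnion.2 ⟨x, hx, Finset.mem_insert_of_mem ?_⟩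
  exact Finset.mem_biUnion.2 ⟨i, Finset.mem_univ _, by simp⟩

/-- Summation by parts (shift) for the forward shift. -/
lemma shift_sum_add (Ω : Finset Pt) (f g : Pt → ℝ) (hf : ∀ x ∉ Ω, f x = 0) (i : Fin 3) :
    ∑ x ∈ big Ω, f x * g (x + ee i) = ∑ y ∈ big Ω, f (y - ee i) * g y := by
  have h1 : ∑ x ∈ Ω, f x * g (x + ee i) = ∑ x ∈ big Ω, f x * g (x + ee i) := by
    refine Finset.sum_subset (subset_big Ω) ?_
    intro x _ hx; rw [hf x hx]; ring
  have himg : Ω.image (· + ee i) ⊆ big Ω := by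
    intro y hy
    rcases Finset.mem_image.1 hy with ⟨x, hx, rfl⟩
    exact add_mem_big Ω hx i
  have h2 : ∑ y ∈ Ω.image (· + ee i), f (y - ee i) * g y
      = ∑ y ∈ big Ω, f (y - ee i) * g y := by
    refine Finset.sum_subset himg ?_
    intro y _ hy
    have : y - ee i ∉ Ω := by
      intro hc
      exact hy (Finset.mem_image.2 ⟨y - ee i, hc, by simp⟩)
    rw [hf _ this]; ring
  have h3 : ∑ y ∈ Ω.image (· + ee i), f (y - ee i) * g y
      = ∑ x ∈ Ω, f x * g (x + ee i) := by
    rw [Finset.sum_image (by intro a _ b _ hab; simpa using hab)]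
    refine Finset.sum_congr rfl ?_
    intro x _; simp
  rw [← h1, ← h2, h3]

/-- Summation by parts (shift) for the backward shift. -/
lemma shift_sum_sub (Ω : Finset Pt) (f g : Pt → ℝ) (hf : ∀ x ∉ Ω, f x = 0) (i : Fin 3) :
    ∑ x ∈ big Ω, f x * g (x - ee i) = ∑ y ∈ big Ω, f (y + ee i) * g y := by
  have h1 : ∑ x ∈ Ω, f x * g (x - ee i) = ∑ x ∈ big Ω, f x * g (x - ee i) := by
    refine Finset.sum_subset (subset_big Ω) ?_
    intro x _ hx; rw [hf x hx]; ring
  have himg : Ω.image (· - ee i) ⊆ big Ω := by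
    intro y hy
    rcases Finset.mem_image.1 hy with ⟨x, hx, rfl⟩
    exact sub_mem_big Ω hx i
  have h2 : ∑ y ∈ Ω.image (· - ee i), f (y + ee i) * g y
      = ∑ y ∈ big Ω, f (y + ee i) * g y := by
    refine Finset.sum_subset himg ?_
    intro y _ hy
    have : y + ee i ∉ Ω := by
      intro hc
      exact hy (Finset.mem_image.2 ⟨y + ee i, hc, by simp⟩)
    rw [hf _ this]; ring
  have h3 : ∑ y ∈ Ω.image (· - ee i), f (y + ee i) * g y
      = ∑ x ∈ Ω, f x * g (x - ee i) := by
    rw [Finset.sum_image (by intro a _ b _ hab; simpa using hab)]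
    refine Finset.sum_congr rfl ?_
    intro x _; simp
  rw [← h1, ← h2, h3]

/-- Summation by parts for the central difference. -/
lemma parts_Dc (h : ℝ) (Ω : Finset Pt) (f φ : Pt → ℝ) (hf : ∀ x ∉ Ω, f x = 0) (i : Fin 3) :
    ∑ x ∈ big Ω, f x * Dc h i φ x = -∑ x ∈ big Ω, φ x * Dc h i f x := by
  have e1 : ∑ x ∈ big Ω, f x * Dc h i φ x
      = ((∑ x ∈ big Ω, f x * φ (x + ee i)) - ∑ x ∈ big Ω, f x * φ (x - ee i)) / (2 * h) := by
    rw [sub_div, Finset.sum_div, Finset.sum_div, ← Finset.sum_sub_distrib]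
    refine Finset.sum_congr rfl ?_
    intro x _; unfold Dc; ring
  have e2 : -∑ x ∈ big Ω, φ x * Dc h i f x
      = ((∑ x ∈ big Ω, φ x * f (x - ee i)) - ∑ x ∈ big Ω, φ x * f (x + ee i)) / (2 * h) := by
    rw [sub_div, Finset.sum_div, Finset.sum_div, ← Finset.sum_sub_distrib,
      ← Finset.sum_neg_distrib]
    refine Finset.sum_congr rfl ?_
    intro x _; unfold Dc; ring
  rw [e1, e2, shift_sum_add Ω f φ hf i, shift_sum_sub Ω f φ hf i]
  congr 1
  rw [← Finset.sum_sub_distrib, ← Finset.sum_sub_distrib]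
  refine Finset.sum_congr rfl ?_
  intro x _; ring

/-- Vector summation by parts: `∑ v · 𝒟φ = -∑ φ (𝒟·v)`. -/
lemma parts_div (h : ℝ) (Ω : Finset Pt) (v : Pt → Fin 3 → ℝ) (φ : Pt → ℝ)
    (hv : ∀ x ∉ Ω, v x = 0) :
    ∑ x ∈ big Ω, ∑ i, v x i * Dc h i φ x = -∑ x ∈ big Ω, φ x * divc h v x := by
  rw [Finset.sum_comm]
  have : ∀ i : Fin 3, ∑ x ∈ big Ω, v x i * Dc h i φ x
      = -∑ x ∈ big Ω, φ x * Dc h i (fun y => v y i) x := by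
    intro i
    exact parts_Dc h Ω (fun y => v y i) φ (fun x hx => by show v x i = 0; rw [hv x hx]; rfl) i
  calc ∑ i, ∑ x ∈ big Ω, v x i * Dc h i φ x
      = ∑ i : Fin 3, -∑ x ∈ big Ω, φ x * Dc h i (fun y => v y i) x :=
        Finset.sum_congr rfl (fun i _ => this i)
    _ = -∑ i : Fin 3, ∑ x ∈ big Ω, φ x * Dc h i (fun y => v y i) x := by
        rw [Finset.sum_neg_distrib]
    _ = -∑ x ∈ big Ω, φ x * divc h v x := by
        rw [Finset.sum_comm]
        congr 1
        refine Finset.sum_congr rfl ?_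
        intro x _
        unfold divc
        rw [Finset.mul_sum]

end Aux

/-- Estimate (2.4) of Theorem 2.4: if `u = 0` on `(Ω_h∖Ω_h^∘) ∪ ∂Ω_h^∘` and
`u = P_h u + 𝒟φ` is its discrete Helmholtz–Hodge decomposition, then
`∑_{Ω_h∖∂Ω_h}|u - P_h u|² ≤ Ã² ∑_{Ω_h^∘}|𝒟·u|²`, where `Ã` is the constant
from the discrete Poincaré inequality II. -/
theorem projection_divergence_estimate (h : ℝ) (hh : 0 < h) (Ω : Finset Pt)
    (Atil : ℝ) (hAtil : 0 < Atil)
    -- discrete Poincaré type inequality II with constant Ã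
    (hPoin : ∀ ψ : Pt → ℝ,
      ∑ p : Fin 3 → ZMod 2, ∑ x ∈ circJ Ω p,
          (ψ x - (∑ y ∈ circJ Ω p, ψ y) / (circJ Ω p).card) ^ 2
        ≤ Atil ^ 2 * ∑ x ∈ Ω \ bdry Ω, ∑ i, (Dc h i ψ x) ^ 2)
    (u w : Pt → Fin 3 → ℝ) (φ : Pt → ℝ)
    (hu0 : ∀ x ∉ Ω, u x = 0)
    (huB : ∀ x ∈ (Ω \ circInt Ω) ∪ bdryCirc Ω, u x = 0)
    (hw0 : ∀ x ∉ Ω, w x = 0) (hφ0 : ∀ x ∉ Ω, φ x = 0)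
    (hdiv : ∀ x ∈ Ω, divc h w x = 0)
    (hdec : ∀ x ∈ Ω \ bdry Ω, ∀ i : Fin 3, w x i + Dc h i φ x = u x i)
    (hwb : ∀ x ∈ bdry Ω, w x = 0)
    (hmean : ∀ p : Fin 3 → ZMod 2, ∑ x ∈ circJ Ω p, φ x = 0) :
    ∑ x ∈ Ω \ bdry Ω, ∑ i, (u x i - w x i) ^ 2
      ≤ Atil ^ 2 * ∑ x ∈ circInt Ω, (divc h u x) ^ 2 := by
  classical
  set B := big Ω with hB
  set S : ℝ := ∑ x ∈ Ω \ bdry Ω, ∑ i, (Dc h i φ x) ^ 2 with hSdef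
  set T : ℝ := ∑ x ∈ circInt Ω, (divc h u x) ^ 2 with hTdef
  -- u - w = 𝒟φ on Ω \ bdry Ω
  have hdec' : ∀ x ∈ Ω \ bdry Ω, ∀ i : Fin 3, u x i - w x i = Dc h i φ x := by
    intro x hx i
    have := hdec x hx i
    linarith
  -- the LHS equals S
  have hLHS : ∑ x ∈ Ω \ bdry Ω, ∑ i, (u x i - w x i) ^ 2 = S := by
    refine Finset.sum_congr rfl ?_
    intro x hx
    refine Finset.sum_congr rfl ?_
    intro i _
    rw [hdec' x hx i]
  rw [hLHS]
  -- support facts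
  have hcircSub : circInt Ω ⊆ Ω \ bdry Ω := by
    intro x hx
    exact (Finset.mem_filter.1 hx).1
  have husupp : ∀ x, x ∉ circInt Ω \ bdryCirc Ω → u x = 0 := by
    intro x hx
    by_cases hxΩ : x ∈ Ω
    · by_cases hxc : x ∈ circInt Ω
      · have hxb : x ∈ bdryCirc Ω := by
          by_contra hb
          exact hx (Finset.mem_sdiff.2 ⟨hxc, hb⟩)
        exact huB x (Finset.mem_union.2 (Or.inr hxb))
      · exact huB x (Finset.mem_union.2 (Or.inl (Finset.mem_sdiff.2 ⟨hxΩ, hxc⟩)))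
    · exact hu0 x hxΩ
  -- divergence of u vanishes off circInt Ω
  have hdivu0 : ∀ x, x ∉ circInt Ω → divc h u x = 0 := by
    intro x hx
    have hnb : ∀ i : Fin 3, u (x + ee i) = 0 ∧ u (x - ee i) = 0 := by
      intro i
      constructor
      · apply husupp
        intro hc
        rcases Finset.mem_sdiff.1 hc with ⟨hc1, hc2⟩
        apply hx
        have hne : ¬ (∃ j : Fin 3, (x + ee i) + ee j ∉ circInt Ω ∨ (x + ee i) - ee j ∉ circInt Ω) := by
          intro hex
          exact hc2 (Finset.mem_filter.2 ⟨hc1, hex⟩)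
        push_neg at hne
        have h2 := (hne i).2
        simpa using h2
      · apply husupp
        intro hc
        rcases Finset.mem_sdiff.1 hc with ⟨hc1, hc2⟩
        apply hx
        have hne : ¬ (∃ j : Fin 3, (x - ee i) + ee j ∉ circInt Ω ∨ (x - ee i) - ee j ∉ circInt Ω) := by
          intro hex
          exact hc2 (Finset.mem_filter.2 ⟨hc1, hex⟩)
        push_neg at hne
        have h2 := (hne i).1
        simpa using h2
    unfold divc Dc
    apply Finset.sum_eq_zero
    intro i _
    simp [(hnb i).1, (hnb i).2]
  -- w vanishes off Ω \ bdry Ω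
  have hwsupp : ∀ x, x ∉ Ω \ bdry Ω → w x = 0 := by
    intro x hx
    by_cases hxΩ : x ∈ Ω
    · have : x ∈ bdry Ω := by
        by_contra hb
        exact hx (Finset.mem_sdiff.2 ⟨hxΩ, hb⟩)
      exact hwb x this
    · exact hw0 x hxΩ
  have hΩsubB : Ω \ bdry Ω ⊆ B := fun x hx => subset_big Ω (Finset.mem_sdiff.1 hx).1
  -- S = ∑ (u - w) · 𝒟φ
  have hS1 : S = ∑ x ∈ Ω \ bdry Ω, ∑ i, (u x i - w x i) * Dc h i φ x := by
    refine Finset.sum_congr rfl ?_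
    intro x hx
    refine Finset.sum_congr rfl ?_
    intro i _
    rw [hdec' x hx i]; ring
  -- the w part vanishes
  have hW : ∑ x ∈ Ω \ bdry Ω, ∑ i, w x i * Dc h i φ x = 0 := by
    have hext : ∑ x ∈ Ω \ bdry Ω, ∑ i, w x i * Dc h i φ x
        = ∑ x ∈ B, ∑ i, w x i * Dc h i φ x := by
      refine Finset.sum_subset hΩsubB ?_
      intro x _ hx
      apply Finset.sum_eq_zero
      intro i _
      rw [hwsupp x hx]
      simp
    rw [hext, parts_div h Ω w φ hw0, neg_eq_zero]
    apply Finset.sum_eq_zero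
    intro x _
    by_cases hxΩ : x ∈ Ω
    · rw [hdiv x hxΩ]; ring
    · rw [hφ0 x hxΩ]; ring
  -- the u part
  have hU : ∑ x ∈ Ω \ bdry Ω, ∑ i, u x i * Dc h i φ x
      = -∑ x ∈ circInt Ω, φ x * divc h u x := by
    have hext : ∑ x ∈ Ω \ bdry Ω, ∑ i, u x i * Dc h i φ x
        = ∑ x ∈ B, ∑ i, u x i * Dc h i φ x := by
      refine Finset.sum_subset hΩsubB ?_
      intro x hxB hx
      apply Finset.sum_eq_zero
      intro i _
      have hu : u x = 0 := by
        apply husupp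
        intro hc
        exact hx (hcircSub (Finset.mem_sdiff.1 hc).1)
      rw [hu]
      simp
    rw [hext, parts_div h Ω u φ hu0]
    congr 1
    symm
    refine Finset.sum_subset (fun x hx => subset_big Ω (Finset.mem_sdiff.1 (hcircSub hx)).1) ?_
    intro x _ hx
    rw [hdivu0 x hx]
    ring
  -- hence S = -∑_{circInt} φ · div u
  have hSkey : S = -∑ x ∈ circInt Ω, φ x * divc h u x := by
    rw [hS1, ← hU, ← sub_zero (∑ x ∈ Ω \ bdry Ω, ∑ i, u x i * Dc h i φ x), ← hW,
      ← Finset.sum_sub_distrib]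
    refine Finset.sum_congr rfl ?_
    intro x _
    rw [← Finset.sum_sub_distrib]
    refine Finset.sum_congr rfl ?_
    intro i _
    ring
  -- Poincaré: ∑_{circInt} φ² ≤ Atil² S
  have hP : ∑ x ∈ circInt Ω, φ x ^ 2 ≤ Atil ^ 2 * S := by
    have hp := hPoin φ
    have heq : ∀ p : Fin 3 → ZMod 2, ∑ x ∈ circJ Ω p,
        (φ x - (∑ y ∈ circJ Ω p, φ y) / (circJ Ω p).card) ^ 2
        = ∑ x ∈ circJ Ω p, φ x ^ 2 := by
      intro p
      rw [hmean p]
      simp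
    rw [Finset.sum_congr rfl (fun p _ => heq p)] at hp
    have hfib : ∑ p : Fin 3 → ZMod 2, ∑ x ∈ circJ Ω p, φ x ^ 2
        = ∑ x ∈ circInt Ω, φ x ^ 2 := by
      have := Finset.sum_fiberwise (circInt Ω) parity (fun x => φ x ^ 2)
      rw [← this]
      refine Finset.sum_congr rfl ?_
      intro p _
      apply Finset.sum_congr _ (fun _ _ => rfl)
      unfold circJ
      congr 1
    rw [hfib] at hp
    exact hp
  -- Cauchy–Schwarz
  have hCS : (∑ x ∈ circInt Ω, φ x * divc h u x) ^ 2
      ≤ (∑ x ∈ circInt Ω, φ x ^ 2) * T := by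
    exact Finset.sum_mul_sq_le_sq_mul_sq (circInt Ω) φ (divc h u)
  have hS0 : 0 ≤ S := Finset.sum_nonneg fun x _ => Finset.sum_nonneg fun i _ => sq_nonneg _
  have hT0 : 0 ≤ T := Finset.sum_nonneg fun x _ => sq_nonneg _
  have hSsq : S ^ 2 ≤ Atil ^ 2 * S * T := by
    have h1 : S ^ 2 = (∑ x ∈ circInt Ω, φ x * divc h u x) ^ 2 := by
      rw [hSkey]; ring
    have hφ2 : 0 ≤ ∑ x ∈ circInt Ω, φ x ^ 2 :=
      Finset.sum_nonneg fun x _ => sq_nonneg _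
    calc S ^ 2 = (∑ x ∈ circInt Ω, φ x * divc h u x) ^ 2 := h1
      _ ≤ (∑ x ∈ circInt Ω, φ x ^ 2) * T := hCS
      _ ≤ (Atil ^ 2 * S) * T := by
          apply mul_le_mul_of_nonneg_right hP hT0
  rcases hS0.eq_or_lt with hS | hS
  · rw [← hS]
    positivity
  · have h1 : S * S ≤ (Atil ^ 2 * T) * S := by nlinarith [hSsq]
    exact le_of_mul_le_mul_right h1 hS
end

section
/- Suppose u^n: Ω_h → ℝ³ satisfies 𝒟·u^n = 0 on Ω_h∖∂Ω_h and u^n = 0 on ∂Ω_h. Then for any h, τ > 0 the implicit finite-difference system for ũ^{n+1}: Ω_h → ℝ³ with ũ^{n+1} = 0 on ∂Ω_h, given by (ũ^{n+1}(x) - u^n(x))/τ = -(1/2)∑_{j=1}³ (u^n_j(x-he^j) D_j ũ^{n+1}(x-he^j) + u^n_j(x+he^j) D_j ũ^{n+1}(x+he^j)) + ∑_{j=1}³ D_j² ũ^{n+1}(x) + f^n(x) for x ∈ Ω_h∖∂Ω_h, is uniquely solvable (the associated square linear system is invertible). -/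
open Finset Real

/-! Energy method. Componentwise the step is a square linear system `L φ = g` for `φ` vanishing
off the interior `Ω \ bdry Ω`, so it suffices that `L` is injective. Pairing `L φ` with `φ` and
shifting sums over `Ω` (free, as `φ` vanishes off the interior), the advection term becomes
`-(1/2) ∑ φ² 𝒟·u`, which is zero because `𝒟·u = 0` wherever `φ ≠ 0`, and `-∑ φ D_j²φ = ∑ (D_j⁺φ)²`.
Hence `0 = ∑ φ L φ ≥ ∑ φ² / τ`. -/

theorem sum_comp_add_right_eq {G M : Type*} [AddGroup G] [AddCommMonoid M] {s : Finset G}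
    {g : G → M} (a : G) (hg : ∀ y, g y ≠ 0 → y ∈ s ∧ y - a ∈ s) :
    ∑ x ∈ s, g (x + a) = ∑ x ∈ s, g x :=
  sum_bij_ne_zero (fun x _ _ => x + a) (fun _ _ hx => (hg _ hx).1)
    (fun _ _ _ _ _ _ => add_right_cancel)
    (fun y _ hy => ⟨y - a, (hg y hy).2, by simpa using hy, sub_add_cancel y a⟩)
    (fun _ _ _ => rfl)

theorem sum_comp_sub_right_eq {G M : Type*} [AddGroup G] [AddCommMonoid M] {s : Finset G}
    {g : G → M} (a : G) (hg : ∀ y, g y ≠ 0 → y ∈ s ∧ y + a ∈ s) :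
    ∑ x ∈ s, g (x - a) = ∑ x ∈ s, g x := by
  simpa only [sub_eq_add_neg] using sum_comp_add_right_eq (-a) (by simpa only [sub_neg_eq_add])

theorem forall_notMem_sdiff_iff {α M : Type*} [DecidableEq α] [Zero M] {s t : Finset α}
    {v : α → M} :
    ((∀ x ∉ s, v x = 0) ∧ ∀ x ∈ t, v x = 0) ↔ ∀ x ∉ s \ t, v x = 0 := by
  simp only [mem_sdiff, not_and_not_right]
  grind

theorem mem_sdiff_bdry_iff {Ω : Finset Pt} {x : Pt} :
    x ∈ Ω \ bdry Ω ↔ x ∈ Ω ∧ ∀ i, x + ee i ∈ Ω ∧ x - ee i ∈ Ω := by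
  simp only [bdry, mem_sdiff, mem_filter, not_and, not_exists, not_or, not_not]
  grind

noncomputable def advection (h : ℝ) (u : Pt → Fin 3 → ℝ) (φ : Pt → ℝ) (x : Pt) : ℝ :=
  1 / 2 * ∑ j, (u (x - ee j) j * Dc h j φ (x - ee j) + u (x + ee j) j * Dc h j φ (x + ee j))

noncomputable def implicitOp (h τ : ℝ) (u : Pt → Fin 3 → ℝ) : (Pt → ℝ) →ₗ[ℝ] Pt → ℝ where
  toFun φ x := φ x / τ + advection h u φ x - ∑ j, D2 h j φ x
  map_add' φ ψ := by
    ext x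
    simp only [advection, Dc, D2, Fin.sum_univ_three, Pi.add_apply]
    ring
  map_smul' c φ := by
    ext x
    simp only [advection, Dc, D2, Fin.sum_univ_three, Pi.smul_apply, smul_eq_mul,
      RingHom.id_apply]
    ring

theorem implicitOp_apply (h τ : ℝ) (u : Pt → Fin 3 → ℝ) (φ : Pt → ℝ) (x : Pt) :
    implicitOp h τ u φ x = φ x / τ + advection h u φ x - ∑ j, D2 h j φ x :=
  rfl

theorem implicit_step_eq_iff {h τ a b : ℝ} {u : Pt → Fin 3 → ℝ} {φ : Pt → ℝ} {x : Pt} :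
    (φ x - a) / τ =
        -(1 / 2) * (∑ j, (u (x - ee j) j * Dc h j φ (x - ee j)
          + u (x + ee j) j * Dc h j φ (x + ee j))) + ∑ j, D2 h j φ x + b ↔
      implicitOp h τ u φ x = a / τ + b := by
  rw [implicitOp_apply, advection, sub_div]
  constructor <;> intro <;> linarith

section ZeroOffInterior

variable {Ω : Finset Pt} {φ : Pt → ℝ}

theorem sum_mul_D2 (hφ : ∀ x ∉ Ω \ bdry Ω, φ x = 0) (h : ℝ) (j : Fin 3) :
    ∑ x ∈ Ω, φ x * D2 h j φ x = -∑ x ∈ Ω, Dp h j φ x ^ 2 := by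
  set ψ : Pt → ℝ := fun y => φ y * ((φ y - φ (y - ee j)) / h ^ 2)
  have hψ : ∑ x ∈ Ω, ψ (x + ee j) = ∑ x ∈ Ω, ψ x := by
    refine sum_comp_add_right_eq _ fun y hy => ?_
    have hy := mem_sdiff_bdry_iff.1 (not_imp_comm.1 (hφ y) (left_ne_zero_of_mul hy))
    exact ⟨hy.1, (hy.2 j).2⟩
  have hpt : ∀ x, φ x * D2 h j φ x + Dp h j φ x ^ 2 = ψ (x + ee j) - ψ x := by
    intro x
    simp only [ψ, D2, Dp, add_sub_cancel_right]
    ring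
  rw [eq_neg_iff_add_eq_zero, ← sum_add_distrib, sum_congr rfl fun x _ => hpt x,
    sum_sub_distrib, hψ, sub_self]

theorem sum_mul_advection (hφ : ∀ x ∉ Ω \ bdry Ω, φ x = 0) (h : ℝ) (u : Pt → Fin 3 → ℝ) :
    ∑ x ∈ Ω, φ x * advection h u φ x = -(1 / 2) * ∑ x ∈ Ω, φ x ^ 2 * divc h u x := by
  set g : Fin 3 → Pt → ℝ := fun j y => u y j / (4 * h) * φ (y - ee j) * φ (y + ee j)
  have hg : ∀ j, ∑ x ∈ Ω, g j (x + ee j) = ∑ x ∈ Ω, g j (x - ee j) := by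
    intro j
    have hmem : ∀ y, g j y ≠ 0 → y ∈ Ω ∧ y - ee j ∈ Ω ∧ y + ee j ∈ Ω := by
      intro y hy
      obtain ⟨hy₁, hy₂⟩ := mul_ne_zero_iff.1 hy
      have hl := mem_sdiff_bdry_iff.1 (not_imp_comm.1 (hφ _) (right_ne_zero_of_mul hy₁))
      have hr := mem_sdiff_bdry_iff.1 (not_imp_comm.1 (hφ _) hy₂)
      exact ⟨by simpa using (hl.2 j).1, hl.1, hr.1⟩
    rw [sum_comp_add_right_eq _ fun y hy => ⟨(hmem y hy).1, (hmem y hy).2.1⟩,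
      sum_comp_sub_right_eq _ fun y hy => ⟨(hmem y hy).1, (hmem y hy).2.2⟩]
  -- `g j` collects the cross terms `φ x * φ (x ± 2 • ee j)`, which telescope
  have hpt : ∀ x, φ x * advection h u φ x
      = -(1 / 2) * (φ x ^ 2 * divc h u x) + ∑ j, (g j (x + ee j) - g j (x - ee j)) := by
    intro x
    simp only [g, advection, divc, Dc, add_sub_cancel_right, sub_add_cancel, Fin.sum_univ_three]
    ring
  rw [sum_congr rfl fun x _ => hpt x, sum_add_distrib, ← mul_sum, sum_comm (s := Ω), add_eq_left]
  exact sum_eq_zero fun j _ => by rw [sum_sub_distrib, hg j, sub_self]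

end ZeroOffInterior

section Solvability

variable {h τ : ℝ} {u : Pt → Fin 3 → ℝ} {Ω : Finset Pt}

theorem sum_mul_implicitOp (hdiv : ∀ x ∈ Ω \ bdry Ω, divc h u x = 0) {φ : Pt → ℝ}
    (hφ : ∀ x ∉ Ω \ bdry Ω, φ x = 0) :
    ∑ x ∈ Ω, φ x * implicitOp h τ u φ x
      = (∑ x ∈ Ω, φ x ^ 2) / τ + ∑ j, ∑ x ∈ Ω, Dp h j φ x ^ 2 := by
  have hdiv₀ : ∑ x ∈ Ω, φ x ^ 2 * divc h u x = 0 := by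
    refine sum_eq_zero fun x _ => ?_
    by_cases hx : x ∈ Ω \ bdry Ω
    · rw [hdiv x hx, mul_zero]
    · rw [hφ x hx, zero_pow two_ne_zero, zero_mul]
  have hsq : ∀ x, φ x * (φ x / τ) = φ x ^ 2 / τ := fun x => by ring
  simp only [implicitOp_apply, mul_sub, mul_add, mul_sum, sum_sub_distrib, sum_add_distrib, hsq]
  rw [sum_mul_advection hφ, hdiv₀, sum_comm (s := Ω), sum_div]
  simp only [sum_mul_D2 hφ, sum_neg_distrib]
  ring

theorem eq_zero_of_implicitOp_eq_zero (hτ : 0 < τ) (hdiv : ∀ x ∈ Ω \ bdry Ω, divc h u x = 0)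
    {φ : Pt → ℝ} (hφ : ∀ x ∉ Ω \ bdry Ω, φ x = 0)
    (hL : ∀ x ∈ Ω \ bdry Ω, implicitOp h τ u φ x = 0) : φ = 0 := by
  have henergy : ∑ x ∈ Ω, φ x * implicitOp h τ u φ x = 0 := by
    refine sum_eq_zero fun x _ => ?_
    by_cases hx : x ∈ Ω \ bdry Ω
    · rw [hL x hx, mul_zero]
    · rw [hφ x hx, zero_mul]
  rw [sum_mul_implicitOp hdiv hφ] at henergy
  have hsq : ∑ x ∈ Ω, φ x ^ 2 = 0 := by
    have hgrad : 0 ≤ ∑ j, ∑ x ∈ Ω, Dp h j φ x ^ 2 := by positivity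
    have hmass : 0 ≤ (∑ x ∈ Ω, φ x ^ 2) / τ := by positivity
    have hmass₀ : (∑ x ∈ Ω, φ x ^ 2) / τ = 0 := by linarith
    simpa [hτ.ne'] using hmass₀
  funext x
  by_cases hx : x ∈ Ω \ bdry Ω
  · exact pow_eq_zero_iff two_ne_zero |>.1 <|
      (sum_eq_zero_iff_of_nonneg fun _ _ => sq_nonneg _).1 hsq x (mem_sdiff.1 hx).1
  · exact hφ x hx

theorem existsUnique_implicitOp_eq (hτ : 0 < τ) (hdiv : ∀ x ∈ Ω \ bdry Ω, divc h u x = 0)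
    (g : Pt → ℝ) :
    ∃! φ : Pt → ℝ, (∀ x ∉ Ω \ bdry Ω, φ x = 0) ∧ ∀ x ∈ Ω \ bdry Ω, implicitOp h τ u φ x = g x := by
  let ι : {x // x ∈ Ω \ bdry Ω} → Pt := Subtype.val
  let E := Function.ExtendByZero.linearMap ℝ ι
  have hE : ∀ v x, x ∉ Ω \ bdry Ω → E v x = 0 := fun v x hx =>
    Function.extend_apply' _ _ _ fun ⟨y, hy⟩ => hx (hy ▸ y.2)
  let T := LinearMap.funLeft ℝ ℝ ι ∘ₗ implicitOp h τ u ∘ₗ E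
  have hT : Function.Injective T := by
    refine (injective_iff_map_eq_zero T).2 fun v hv => funext fun x => ?_
    have hEv := eq_zero_of_implicitOp_eq_zero hτ hdiv (hE v) fun y hy => congrFun hv ⟨y, hy⟩
    simpa [E, ι, Subtype.val_injective.extend_apply] using congrFun hEv x
  obtain ⟨v, hv⟩ := LinearMap.injective_iff_surjective.1 hT (g ∘ ι)
  refine ⟨E v, ⟨hE v, fun x hx => congrFun hv ⟨x, hx⟩⟩, fun ψ ⟨hψ₀, hψ⟩ => ?_⟩
  rw [← sub_eq_zero]
  refine eq_zero_of_implicitOp_eq_zero hτ hdiv (fun x hx => by simp [hψ₀ x hx, hE v x hx])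
    fun x hx => ?_
  rw [map_sub, Pi.sub_apply, hψ x hx, sub_eq_zero]
  exact (congrFun hv ⟨x, hx⟩).symm

end Solvability

theorem implicit_step_unique_solvable_general (h τ : ℝ) (hτ : 0 < τ)
    (Ω : Finset Pt) (un f : Pt → Fin 3 → ℝ)
    (hdiv : ∀ x ∈ Ω \ bdry Ω, divc h un x = 0) :
    ∃! ut : Pt → Fin 3 → ℝ,
      (∀ x ∉ Ω, ut x = 0) ∧ (∀ x ∈ bdry Ω, ut x = 0) ∧
      (∀ x ∈ Ω \ bdry Ω, ∀ i : Fin 3,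
        (ut x i - un x i) / τ =
          -(1 / 2) * (∑ j, (un (x - ee j) j * Dc h j (fun y => ut y i) (x - ee j)
              + un (x + ee j) j * Dc h j (fun y => ut y i) (x + ee j)))
          + (∑ j, D2 h j (fun y => ut y i) x) + f x i) := by
  choose φ hφ hφ_unique using fun i : Fin 3 =>
    existsUnique_implicitOp_eq (u := un) hτ hdiv fun x => un x i / τ + f x i
  refine ⟨fun x i => φ i x, ?_, fun ut hut => ?_⟩
  · beta_reduce
    rw [← and_assoc, forall_notMem_sdiff_iff]
    exact ⟨fun x hx => funext fun i => (hφ i).1 x hx,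
      fun x hx i => implicit_step_eq_iff.2 ((hφ i).2 x hx)⟩
  · beta_reduce at hut
    rw [← and_assoc, forall_notMem_sdiff_iff] at hut
    funext x i
    exact congrFun (hφ_unique i (fun y => ut y i)
      ⟨fun y hy => congrFun (hut.1 y hy) i, fun y hy => implicit_step_eq_iff.1 (hut.2 y hy i)⟩) x

/-- **Unconditional solvability of the implicit step** (Theorem 2.6): if
`𝒟·uⁿ = 0` on `Ω_h∖∂Ω_h` and `uⁿ = 0` on `∂Ω_h`, then for any mesh sizes
`h, τ > 0` the implicit advection–diffusion system for `ũⁿ⁺¹` (with zero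
boundary values) has a unique solution. -/
theorem implicit_step_unique_solvable (h τ : ℝ) (hh : 0 < h) (hτ : 0 < τ)
    (Ω : Finset Pt) (un f : Pt → Fin 3 → ℝ)
    (hun0 : ∀ x ∉ Ω, un x = 0)
    (hdiv : ∀ x ∈ Ω \ bdry Ω, divc h un x = 0)
    (hunb : ∀ x ∈ bdry Ω, un x = 0) :
    ∃! ut : Pt → Fin 3 → ℝ,
      (∀ x ∉ Ω, ut x = 0) ∧ (∀ x ∈ bdry Ω, ut x = 0) ∧
      (∀ x ∈ Ω \ bdry Ω, ∀ i : Fin 3,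
        (ut x i - un x i) / τ =
          -(1 / 2) * (∑ j, (un (x - ee j) j * Dc h j (fun y => ut y i) (x - ee j)
              + un (x + ee j) j * Dc h j (fun y => ut y i) (x + ee j)))
          + (∑ j, D2 h j (fun y => ut y i) x) + f x i) :=
  implicit_step_unique_solvable_general h τ hτ Ω un f hdiv
end

section
/- Let ũ^{n+1}: Ω_h → ℝ³ vanish on ∂Ω_h and satisfy the homogeneous implicit equation ũ^{n+1}(x) = -(τ/2)∑_j (u^n_j(x-he^j)D_j ũ^{n+1}(x-he^j) + u^n_j(x+he^j)D_j ũ^{n+1}(x+he^j)) + τ∑_j D_j² ũ^{n+1}(x) on Ω_h∖∂Ω_h, where 𝒟·u^n = 0 on Ω_h∖∂Ω_h and u^n = 0 on ∂Ω_h. Then ‖ũ^{n+1}‖²_{Ω_h} + τ∑_{j=1}³ ‖D_j⁺ ũ^{n+1}‖²_{Ω_h} = 0, hence ũ^{n+1} ≡ 0. -/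
open Finset Real

/-! Pair the equation with `ũ` and sum over `Ω_h`. Lattice sums of functions vanishing off `Ω_h`
are translation invariant, so summation by parts turns the advection term into `-∑ (𝒟·uⁿ) |ũ|²`,
which vanishes because `ũ` is supported where `𝒟·uⁿ = 0`, and the diffusion term into
`-∑_j ‖D_j⁺ũ‖²`. What remains is a sum of nonnegative terms equal to zero. -/

theorem Finset.sum_comp_add_right_eq_sum {G M : Type*} [AddGroup G] [AddCommMonoid M]
    {S : Finset G} {F : G → M} (e : G) (hF : ∀ x ∉ S, F x = 0)
    (hFe : ∀ x ∉ S, F (x + e) = 0) :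
    ∑ x ∈ S, F (x + e) = ∑ x ∈ S, F x := by
  rw [← finsum_eq_sum_of_support_subset (fun x => F (x + e)) ?_,
    ← finsum_eq_sum_of_support_subset F ?_]
  · exact finsum_comp_equiv (Equiv.addRight e)
  · exact fun x hx => by_contra fun hxS => hx (hF x hxS)
  · exact fun x hx => by_contra fun hxS => hx (hFe x hxS)

theorem Finset.sum_comp_add_mul_eq_sum_mul_comp_sub {G R : Type*} [AddGroup G]
    [NonUnitalNonAssocSemiring R] {S : Finset G} {f g : G → R} (e : G)
    (hf : ∀ x ∉ S, f x = 0) (hg : ∀ x ∉ S, g x = 0) :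
    ∑ x ∈ S, f (x + e) * g x = ∑ x ∈ S, f x * g (x - e) := by
  simpa using Finset.sum_comp_add_right_eq_sum (F := fun x => f x * g (x - e)) e
    (fun x hx => by simp [hf x hx]) (fun x hx => by simp [hg x hx])

section Lattice

variable {Ω : Finset Pt}

theorem mem_of_add_ee_mem_sdiff_bdry {x : Pt} {j : Fin 3} (hx : x + ee j ∈ Ω \ bdry Ω) :
    x ∈ Ω := by
  classical
  obtain ⟨hxΩ, hxb⟩ := mem_sdiff.1 hx
  by_contra h
  exact hxb (mem_filter.2 ⟨hxΩ, j, Or.inr (by simpa using h)⟩)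

theorem sum_mul_D2_eq_neg_sum_Dp_sq (h : ℝ) (j : Fin 3) {v : Pt → ℝ}
    (hv : ∀ x ∉ Ω \ bdry Ω, v x = 0) :
    ∑ x ∈ Ω, v x * D2 h j v x = -∑ x ∈ Ω, Dp h j v x ^ 2 := by
  have hvΩ : ∀ x ∉ Ω, v x = 0 := fun x hx => hv x fun h' => hx (mem_sdiff.1 h').1
  have cross : ∑ x ∈ Ω, v (x + ee j) * v x = ∑ x ∈ Ω, v x * v (x - ee j) :=
    sum_comp_add_mul_eq_sum_mul_comp_sub _ hvΩ hvΩ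
  have shift_sq : ∑ x ∈ Ω, v (x + ee j) ^ 2 = ∑ x ∈ Ω, v x ^ 2 :=
    sum_comp_add_right_eq_sum (F := fun x => v x ^ 2) _ (fun x hx => by simp [hvΩ x hx])
      (fun x hx => by simp [hv _ fun h' => hx (mem_of_add_ee_mem_sdiff_bdry h')])
  rw [eq_neg_iff_add_eq_zero, ← sum_add_distrib]
  calc ∑ x ∈ Ω, (v x * D2 h j v x + Dp h j v x ^ 2)
      = ((∑ x ∈ Ω, v (x + ee j) ^ 2 - ∑ x ∈ Ω, v x ^ 2)
          - (∑ x ∈ Ω, v (x + ee j) * v x - ∑ x ∈ Ω, v x * v (x - ee j))) / h ^ 2 := by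
        rw [← sum_sub_distrib, ← sum_sub_distrib, ← sum_sub_distrib, sum_div]
        refine sum_congr rfl fun x _ => ?_
        simp only [D2, Dp]
        ring
    _ = 0 := by rw [shift_sq, cross]; ring

theorem sum_mul_advection_eq_neg_sum_Dc_mul_sq (h : ℝ) (j : Fin 3) {a v : Pt → ℝ}
    (ha : ∀ x ∉ Ω, a x = 0) (hv : ∀ x ∉ Ω, v x = 0) :
    ∑ x ∈ Ω, v x * (a (x - ee j) * Dc h j v (x - ee j) + a (x + ee j) * Dc h j v (x + ee j))
      = -∑ x ∈ Ω, Dc h j a x * v x ^ 2 := by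
  have haDv : ∀ x ∉ Ω, a x * Dc h j v x = 0 := fun x hx => by simp [ha x hx]
  have hv_sq : ∀ x ∉ Ω, v x ^ 2 = 0 := fun x hx => by simp [hv x hx]
  have back := sum_comp_add_mul_eq_sum_mul_comp_sub (ee j) hv haDv
  have fwd := sum_comp_add_mul_eq_sum_mul_comp_sub (ee j) haDv hv
  have back_sq := sum_comp_add_mul_eq_sum_mul_comp_sub (ee j) hv_sq ha
  have fwd_sq := sum_comp_add_mul_eq_sum_mul_comp_sub (ee j) ha hv_sq
  calc ∑ x ∈ Ω, v x * (a (x - ee j) * Dc h j v (x - ee j) + a (x + ee j) * Dc h j v (x + ee j))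
      = ∑ x ∈ Ω, v (x + ee j) * (a x * Dc h j v x)
          + ∑ x ∈ Ω, a x * Dc h j v x * v (x - ee j) := by
        rw [back, ← fwd, ← sum_add_distrib]
        exact sum_congr rfl fun x _ => by ring
    _ = (∑ x ∈ Ω, v (x + ee j) ^ 2 * a x - ∑ x ∈ Ω, a x * v (x - ee j) ^ 2) / (2 * h) := by
        rw [← sum_add_distrib, ← sum_sub_distrib, sum_div]
        refine sum_congr rfl fun x _ => ?_
        simp only [Dc]
        ring
    _ = -∑ x ∈ Ω, Dc h j a x * v x ^ 2 := by
        rw [back_sq, ← fwd_sq, ← sum_sub_distrib, sum_div, ← sum_neg_distrib]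
        refine sum_congr rfl fun x _ => ?_
        simp only [Dc]
        ring

theorem sum_sum_Dc_mul_sq_eq_zero (h : ℝ) {u : Pt → Fin 3 → ℝ} {v : Pt → ℝ}
    (hdiv : ∀ x ∈ Ω \ bdry Ω, divc h u x = 0) (hv : ∀ x ∉ Ω \ bdry Ω, v x = 0) :
    ∑ j, ∑ x ∈ Ω, Dc h j (fun y => u y j) x * v x ^ 2 = 0 := by
  rw [sum_comm]
  refine sum_eq_zero fun x _ => ?_
  rw [← sum_mul]
  by_cases hx : x ∈ Ω \ bdry Ω
  · exact mul_eq_zero_of_left (hdiv x hx) _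
  · simp [hv x hx]

theorem sum_sq_add_sum_Dp_sq_eq_zero (h τ : ℝ) {un : Pt → Fin 3 → ℝ} {v : Pt → ℝ}
    (hun : ∀ x ∉ Ω, un x = 0) (hdiv : ∀ x ∈ Ω \ bdry Ω, divc h un x = 0)
    (hv : ∀ x ∉ Ω \ bdry Ω, v x = 0)
    (heq : ∀ x ∈ Ω \ bdry Ω,
      v x = -(τ / 2) * (∑ j, (un (x - ee j) j * Dc h j v (x - ee j)
            + un (x + ee j) j * Dc h j v (x + ee j)))
        + τ * (∑ j, D2 h j v x)) :
    ∑ x ∈ Ω, v x ^ 2 + τ * ∑ j, ∑ x ∈ Ω, Dp h j v x ^ 2 = 0 := by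
  have hvΩ : ∀ x ∉ Ω, v x = 0 := fun x hx => hv x fun h' => hx (mem_sdiff.1 h').1
  have hunΩ : ∀ j, ∀ x ∉ Ω, un x j = 0 := fun j x hx => by simp [hun x hx]
  have pairing : ∑ x ∈ Ω, v x ^ 2
      = -(τ / 2) * ∑ j, ∑ x ∈ Ω, v x * (un (x - ee j) j * Dc h j v (x - ee j)
            + un (x + ee j) j * Dc h j v (x + ee j))
        + τ * ∑ j, ∑ x ∈ Ω, v x * D2 h j v x := by
    rw [sum_comm, sum_comm (s := univ), mul_sum, mul_sum, ← sum_add_distrib]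
    refine sum_congr rfl fun x _ => ?_
    by_cases hx : x ∈ Ω \ bdry Ω
    · rw [← mul_sum, ← mul_sum, sq, heq x hx]
      ring
    · simp [hv x hx]
  simp only [sum_mul_advection_eq_neg_sum_Dc_mul_sq h _ (hunΩ _) hvΩ,
    sum_mul_D2_eq_neg_sum_Dp_sq h _ hv, sum_neg_distrib,
    sum_sum_Dc_mul_sq_eq_zero h hdiv hv] at pairing
  linarith

theorem eq_zero_of_sum_sq_add_sum_Dp_sq_eq_zero {h τ : ℝ} {v : Pt → ℝ} (hτ : 0 ≤ τ)
    (henergy : ∑ x ∈ Ω, v x ^ 2 + τ * ∑ j, ∑ x ∈ Ω, Dp h j v x ^ 2 = 0) {x : Pt} (hx : x ∈ Ω) :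
    v x = 0 := by
  have hsq : ∑ x ∈ Ω, v x ^ 2 = 0 := by
    have : 0 ≤ τ * ∑ j, ∑ x ∈ Ω, Dp h j v x ^ 2 := by positivity
    have : 0 ≤ ∑ x ∈ Ω, v x ^ 2 := by positivity
    linarith
  exact pow_eq_zero_iff two_ne_zero |>.1 <|
    (sum_eq_zero_iff_of_nonneg fun _ _ => sq_nonneg _).1 hsq x hx

end Lattice

theorem homogeneous_implicit_energy_general (h τ : ℝ) (hτ : 0 < τ)
    (Ω : Finset Pt) (un ut : Pt → Fin 3 → ℝ)
    (hun0 : ∀ x ∉ Ω, un x = 0)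
    (hdiv : ∀ x ∈ Ω \ bdry Ω, divc h un x = 0)
    (hut0 : ∀ x ∉ Ω, ut x = 0) (hutb : ∀ x ∈ bdry Ω, ut x = 0)
    (heq : ∀ x ∈ Ω \ bdry Ω, ∀ i : Fin 3,
      ut x i =
        -(τ / 2) * (∑ j, (un (x - ee j) j * Dc h j (fun y => ut y i) (x - ee j)
            + un (x + ee j) j * Dc h j (fun y => ut y i) (x + ee j)))
        + τ * (∑ j, D2 h j (fun y => ut y i) x)) :
    (∑ x ∈ Ω, (∑ i, (ut x i) ^ 2) * h ^ 3)
      + τ * ∑ j, ∑ x ∈ Ω, (∑ i, (Dp h j (fun y => ut y i) x) ^ 2) * h ^ 3 = 0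
    ∧ ∀ x, ut x = 0 := by
  have hut : ∀ x ∉ Ω \ bdry Ω, ut x = 0 := by
    intro x hx
    by_cases hxΩ : x ∈ Ω
    · exact hutb x (by simpa [hxΩ] using hx)
    · exact hut0 x hxΩ
  have energy i : ∑ x ∈ Ω, ut x i ^ 2 + τ * ∑ j, ∑ x ∈ Ω, Dp h j (fun y => ut y i) x ^ 2 = 0 :=
    sum_sq_add_sum_Dp_sq_eq_zero h τ hun0 hdiv (fun x hx => by simp [hut x hx])
      (fun x hx => heq x hx i)
  constructor
  · calc (∑ x ∈ Ω, (∑ i, (ut x i) ^ 2) * h ^ 3)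
          + τ * ∑ j, ∑ x ∈ Ω, (∑ i, (Dp h j (fun y => ut y i) x) ^ 2) * h ^ 3
        = ∑ i, h ^ 3 * (∑ x ∈ Ω, ut x i ^ 2
            + τ * ∑ j, ∑ x ∈ Ω, Dp h j (fun y => ut y i) x ^ 2) := by
          simp only [sum_mul, mul_sum, mul_add, sum_add_distrib]
          rw [sum_comm (s := Ω), sum_comm_cycle]
          congr 1 <;> simp only [mul_comm, mul_left_comm]
      _ = 0 := by simp [energy]
  · intro x
    funext i
    by_cases hxΩ : x ∈ Ω
    · exact eq_zero_of_sum_sq_add_sum_Dp_sq_eq_zero hτ.le (energy i) hxΩ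
    · rw [hut0 x hxΩ]

/-- Energy identity for the homogeneous implicit equation (key step in the proof
of Theorem 2.6): `‖ũⁿ⁺¹‖²_{Ω_h} + τ ∑_j ‖D_j⁺ũⁿ⁺¹‖²_{Ω_h} = 0`, hence `ũⁿ⁺¹ ≡ 0`. -/
theorem homogeneous_implicit_energy (h τ : ℝ) (hh : 0 < h) (hτ : 0 < τ)
    (Ω : Finset Pt) (un ut : Pt → Fin 3 → ℝ)
    (hun0 : ∀ x ∉ Ω, un x = 0)
    (hdiv : ∀ x ∈ Ω \ bdry Ω, divc h un x = 0)
    (hunb : ∀ x ∈ bdry Ω, un x = 0)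
    (hut0 : ∀ x ∉ Ω, ut x = 0) (hutb : ∀ x ∈ bdry Ω, ut x = 0)
    (heq : ∀ x ∈ Ω \ bdry Ω, ∀ i : Fin 3,
      ut x i =
        -(τ / 2) * (∑ j, (un (x - ee j) j * Dc h j (fun y => ut y i) (x - ee j)
            + un (x + ee j) j * Dc h j (fun y => ut y i) (x + ee j)))
        + τ * (∑ j, D2 h j (fun y => ut y i) x)) :
    (∑ x ∈ Ω, (∑ i, (ut x i) ^ 2) * h ^ 3)
      + τ * ∑ j, ∑ x ∈ Ω, (∑ i, (Dp h j (fun y => ut y i) x) ^ 2) * h ^ 3 = 0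
    ∧ ∀ x, ut x = 0 :=
  homogeneous_implicit_energy_general h τ hτ Ω un ut hun0 hdiv hut0 hutb heq
end

section
/- Let u^n: Ω_h → ℝ³ satisfy 𝒟·u^n = 0 on Ω_h∖∂Ω_h and vanish on ∂Ω_h, and let ũ^{n+1} solve the implicit advection–diffusion step with forcing f^n. Then ‖ũ^{n+1}‖_{Ω_h} ≤ ‖u^n‖_{Ω_h} + τ‖f^n‖_{Ω_h}, where ‖·‖_{Ω_h} is the discrete L² norm. -/
open Finset Real

/-- Discrete L² norm `‖u‖_{Ω_h}`. -/
noncomputable def dnorm (h : ℝ) (Ω : Finset Pt) (u : Pt → Fin 3 → ℝ) : ℝ :=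
  Real.sqrt (∑ x ∈ Ω, (∑ i, (u x i) ^ 2) * h ^ 3)



noncomputable def bigS (Ω : Finset Pt) : Finset Pt :=
  (Finset.Icc (fun _ => (-2:ℤ)) (fun _ => (2:ℤ))).biUnion (fun v => Ω.image (· + v))

lemma ee_bound (j k : Fin 3) : -2 ≤ ee j k ∧ ee j k ≤ 2 := by
  constructor <;> · simp only [ee]; split <;> norm_num

lemma ee2_bound (j k : Fin 3) : -2 ≤ (ee j + ee j) k ∧ (ee j + ee j) k ≤ 2 := by
  have he : ee j k = 0 ∨ ee j k = 1 := by simp only [ee]; split <;> simp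
  simp only [Pi.add_apply]
  rcases he with h | h <;> rw [h] <;> norm_num

lemma mem_Icc2 {v : Pt} (hv : ∀ k, -2 ≤ v k ∧ v k ≤ 2) :
    v ∈ Finset.Icc (fun _ => (-2:ℤ)) (fun _ => (2:ℤ)) := by
  rw [Finset.mem_Icc]
  exact ⟨fun k => (hv k).1, fun k => (hv k).2⟩

lemma shift_sum (Ω : Finset Pt) (g : Pt → ℝ) (hg : ∀ x ∉ Ω, g x = 0) (v : Pt)
    (hv : ∀ k, -2 ≤ v k ∧ v k ≤ 2) :
    ∑ x ∈ bigS Ω, g (x + v) = ∑ x ∈ Ω, g x := by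
  have hinj : ∀ x ∈ bigS Ω, ∀ y ∈ bigS Ω, x + v = y + v → x = y :=
    fun x _ y _ hxy => add_right_cancel hxy
  rw [← Finset.sum_image hinj]
  symm
  apply Finset.sum_subset
  · intro y hy
    refine Finset.mem_image.mpr ⟨y - v, ?_, by abel⟩
    refine Finset.mem_biUnion.mpr ⟨-v, mem_Icc2 (fun k => by have := hv k; simp only [Pi.neg_apply]; omega),
      Finset.mem_image.mpr ⟨y, hy, by abel⟩⟩
  · intro y _ hy; exact hg y hy

lemma sum_S_eq (Ω : Finset Pt) (g : Pt → ℝ) (hg : ∀ x ∉ Ω, g x = 0) :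
    ∑ x ∈ bigS Ω, g x = ∑ x ∈ Ω, g x := by
  have := shift_sum Ω g hg 0 (by intro k; simp)
  simpa using this

lemma cs_helper (s : Finset Pt) (a b : Pt → Fin 3 → ℝ) :
    ∑ x ∈ s, ∑ i, a x i * b x i ≤
      Real.sqrt (∑ x ∈ s, ∑ i, a x i ^ 2) * Real.sqrt (∑ x ∈ s, ∑ i, b x i ^ 2) := by
  have h2 := Finset.sum_mul_sq_le_sq_mul_sq (s ×ˢ (Finset.univ : Finset (Fin 3)))
      (fun p => a p.1 p.2) (fun p => b p.1 p.2)
  have e1 : ∑ p ∈ s ×ˢ (Finset.univ : Finset (Fin 3)), a p.1 p.2 * b p.1 p.2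
      = ∑ x ∈ s, ∑ i, a x i * b x i := by rw [Finset.sum_product]
  have e2 : ∑ p ∈ s ×ˢ (Finset.univ : Finset (Fin 3)), a p.1 p.2 ^ 2
      = ∑ x ∈ s, ∑ i, a x i ^ 2 := by rw [Finset.sum_product]
  have e3 : ∑ p ∈ s ×ˢ (Finset.univ : Finset (Fin 3)), b p.1 p.2 ^ 2
      = ∑ x ∈ s, ∑ i, b x i ^ 2 := by rw [Finset.sum_product]
  rw [e1, e2, e3] at h2
  have hnn : 0 ≤ ∑ x ∈ s, ∑ i, a x i ^ 2 :=
    Finset.sum_nonneg fun _ _ => Finset.sum_nonneg fun _ _ => sq_nonneg _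
  calc ∑ x ∈ s, ∑ i, a x i * b x i ≤ |∑ x ∈ s, ∑ i, a x i * b x i| := le_abs_self _
    _ = Real.sqrt ((∑ x ∈ s, ∑ i, a x i * b x i) ^ 2) := (Real.sqrt_sq_eq_abs _).symm
    _ ≤ Real.sqrt ((∑ x ∈ s, ∑ i, a x i ^ 2) * ∑ x ∈ s, ∑ i, b x i ^ 2) := Real.sqrt_le_sqrt h2
    _ = _ := Real.sqrt_mul hnn _

/-- Basic energy estimate (2.11): the solution of the implicit advection–diffusion
step satisfies `‖ũⁿ⁺¹‖_{Ω_h} ≤ ‖uⁿ‖_{Ω_h} + τ‖fⁿ‖_{Ω_h}`. -/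
theorem implicit_step_energy_estimate (h τ : ℝ) (hh : 0 < h) (hτ : 0 < τ)
    (Ω : Finset Pt) (un f ut : Pt → Fin 3 → ℝ)
    (hun0 : ∀ x ∉ Ω, un x = 0)
    (hdiv : ∀ x ∈ Ω \ bdry Ω, divc h un x = 0)
    (hunb : ∀ x ∈ bdry Ω, un x = 0)
    (hut0 : ∀ x ∉ Ω, ut x = 0) (hutb : ∀ x ∈ bdry Ω, ut x = 0)
    (heq : ∀ x ∈ Ω \ bdry Ω, ∀ i : Fin 3,
      (ut x i - un x i) / τ =
        -(1 / 2) * (∑ j, (un (x - ee j) j * Dc h j (fun y => ut y i) (x - ee j)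
            + un (x + ee j) j * Dc h j (fun y => ut y i) (x + ee j)))
        + (∑ j, D2 h j (fun y => ut y i) x) + f x i) :
    dnorm h Ω ut ≤ dnorm h Ω un + τ * dnorm h Ω f := by
  have hτ0 : τ ≠ 0 := ne_of_gt hτ
  have hutΩ : ∀ x ∉ Ω, ∀ i : Fin 3, ut x i = 0 := fun x hx i => by rw [hut0 x hx]; rfl
  have hutz : ∀ x, x ∉ Ω \ bdry Ω → ∀ i : Fin 3, ut x i = 0 := by
    intro x hx i
    by_cases hΩ : x ∈ Ω
    · have hbd : x ∈ bdry Ω := by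
        by_contra hb; exact hx (Finset.mem_sdiff.mpr ⟨hΩ, hb⟩)
      rw [hutb x hbd]; rfl
    · exact hutΩ x hΩ i
  -- pointwise identity: equation multiplied by ut
  have hpt : ∀ x : Pt, ∀ i : Fin 3,
      ut x i * (ut x i - un x i)
        = τ * (ut x i * (-(1 / 2) * (∑ j, (un (x - ee j) j * Dc h j (fun y => ut y i) (x - ee j)
              + un (x + ee j) j * Dc h j (fun y => ut y i) (x + ee j)))
          + (∑ j, D2 h j (fun y => ut y i) x) + f x i)) := by
    intro x i
    by_cases hx : x ∈ Ω \ bdry Ω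
    · have e := heq x hx i
      rw [div_eq_iff hτ0] at e
      rw [e]; ring
    · rw [hutz x hx i]; ring
  -- advection skew-symmetry: per component i the advection pairing vanishes
  have adv : ∀ i : Fin 3,
      ∑ j : Fin 3, ∑ x ∈ bigS Ω, ut x i *
        (un (x - ee j) j * Dc h j (fun y => ut y i) (x - ee j)
          + un (x + ee j) j * Dc h j (fun y => ut y i) (x + ee j)) = 0 := by
    intro i
    have step1 : ∀ j : Fin 3,
        ∑ x ∈ bigS Ω, ut x i * (un (x - ee j) j * Dc h j (fun y => ut y i) (x - ee j)
          + un (x + ee j) j * Dc h j (fun y => ut y i) (x + ee j))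
        = ∑ x ∈ bigS Ω, ut x i ^ 2 * (un (x - ee j) j - un (x + ee j) j) / (2 * h) := by
      intro j
      have hgs : ∀ x ∉ Ω, ut (x - (ee j + ee j)) i * (un (x - ee j) j * ut x i) = 0 :=
        fun x hx => by rw [hutΩ x hx i]; ring
      have h2 : ∑ x ∈ bigS Ω, ut x i * (un (x + ee j) j * ut (x + (ee j + ee j)) i)
          = ∑ x ∈ Ω, ut (x - (ee j + ee j)) i * (un (x - ee j) j * ut x i) := by
        refine Eq.trans ?_ (shift_sum Ω
          (fun y => ut (y - (ee j + ee j)) i * (un (y - ee j) j * ut y i)) hgs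
          (ee j + ee j) (ee2_bound j))
        refine Finset.sum_congr rfl fun x _ => ?_
        have a5 : x + (ee j + ee j) - (ee j + ee j) = x := by abel
        have a6 : x + (ee j + ee j) - ee j = x + ee j := by abel
        show ut x i * (un (x + ee j) j * ut (x + (ee j + ee j)) i)
          = ut (x + (ee j + ee j) - (ee j + ee j)) i *
              (un (x + (ee j + ee j) - ee j) j * ut (x + (ee j + ee j)) i)
        rw [a5, a6]
      have h0 : ∑ x ∈ bigS Ω, ut (x - (ee j + ee j)) i * (un (x - ee j) j * ut x i)
          = ∑ x ∈ Ω, ut (x - (ee j + ee j)) i * (un (x - ee j) j * ut x i) :=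
        sum_S_eq Ω _ hgs
      have hptw : ∀ x : Pt,
          ut x i * (un (x - ee j) j * Dc h j (fun y => ut y i) (x - ee j)
            + un (x + ee j) j * Dc h j (fun y => ut y i) (x + ee j))
          = ut x i ^ 2 * (un (x - ee j) j - un (x + ee j) j) / (2 * h)
            + (ut x i * (un (x + ee j) j * ut (x + (ee j + ee j)) i)
               - ut (x - (ee j + ee j)) i * (un (x - ee j) j * ut x i)) / (2 * h) := by
        intro x
        have a1 : x - ee j + ee j = x := by abel
        have a2 : x - ee j - ee j = x - (ee j + ee j) := by abel
        have a3 : x + ee j + ee j = x + (ee j + ee j) := by abel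
        have a4 : x + ee j - ee j = x := by abel
        simp only [Dc, a1, a2, a3, a4]
        ring
      calc ∑ x ∈ bigS Ω, ut x i * (un (x - ee j) j * Dc h j (fun y => ut y i) (x - ee j)
              + un (x + ee j) j * Dc h j (fun y => ut y i) (x + ee j))
          = ∑ x ∈ bigS Ω, (ut x i ^ 2 * (un (x - ee j) j - un (x + ee j) j) / (2 * h)
            + (ut x i * (un (x + ee j) j * ut (x + (ee j + ee j)) i)
               - ut (x - (ee j + ee j)) i * (un (x - ee j) j * ut x i)) / (2 * h)) :=
            Finset.sum_congr rfl fun x _ => hptw x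
        _ = (∑ x ∈ bigS Ω, ut x i ^ 2 * (un (x - ee j) j - un (x + ee j) j) / (2 * h))
            + ((∑ x ∈ bigS Ω, ut x i * (un (x + ee j) j * ut (x + (ee j + ee j)) i))
               - ∑ x ∈ bigS Ω, ut (x - (ee j + ee j)) i * (un (x - ee j) j * ut x i)) / (2 * h) := by
            rw [Finset.sum_add_distrib]
            congr 1
            rw [← Finset.sum_div, Finset.sum_sub_distrib]
        _ = ∑ x ∈ bigS Ω, ut x i ^ 2 * (un (x - ee j) j - un (x + ee j) j) / (2 * h) := by
            rw [h2, h0]; simp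
    calc ∑ j : Fin 3, ∑ x ∈ bigS Ω, ut x i *
          (un (x - ee j) j * Dc h j (fun y => ut y i) (x - ee j)
            + un (x + ee j) j * Dc h j (fun y => ut y i) (x + ee j))
        = ∑ j : Fin 3, ∑ x ∈ bigS Ω,
            ut x i ^ 2 * (un (x - ee j) j - un (x + ee j) j) / (2 * h) :=
          Finset.sum_congr rfl fun j _ => step1 j
      _ = ∑ x ∈ bigS Ω, ∑ j : Fin 3,
            ut x i ^ 2 * (un (x - ee j) j - un (x + ee j) j) / (2 * h) := Finset.sum_comm
      _ = 0 := by
          refine Finset.sum_eq_zero fun x _ => ?_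
          by_cases hx : x ∈ Ω \ bdry Ω
          · have hdz : ∑ j : Fin 3, ut x i ^ 2 * (un (x - ee j) j - un (x + ee j) j) / (2 * h)
                = -(ut x i ^ 2 * divc h un x) := by
              rw [divc, Finset.mul_sum, ← Finset.sum_neg_distrib]
              exact Finset.sum_congr rfl fun j _ => by simp only [Dc]; ring
            rw [hdz, hdiv x hx, mul_zero, neg_zero]
          · exact Finset.sum_eq_zero fun j _ => by rw [hutz x hx i]; ring
  -- diffusion dissipativity
  have diff : ∀ i j : Fin 3,
      ∑ x ∈ bigS Ω, ut x i * D2 h j (fun y => ut y i) x ≤ 0 := by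
    intro i j
    have hq : ∀ x ∉ Ω, ut x i ^ 2 = 0 := fun x hx => by rw [hutΩ x hx i]; ring
    have hr : ∀ x ∉ Ω, ut (x - ee j) i * ut x i = 0 := fun x hx => by rw [hutΩ x hx i]; ring
    have hq1 : ∑ x ∈ bigS Ω, ut (x + ee j) i ^ 2 = ∑ x ∈ Ω, ut x i ^ 2 :=
      shift_sum Ω (fun y => ut y i ^ 2) hq (ee j) (ee_bound j)
    have hq0 : ∑ x ∈ bigS Ω, ut x i ^ 2 = ∑ x ∈ Ω, ut x i ^ 2 :=
      sum_S_eq Ω (fun y => ut y i ^ 2) hq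
    have hr1 : ∑ x ∈ bigS Ω, ut (x + ee j - ee j) i * ut (x + ee j) i
        = ∑ x ∈ Ω, ut (x - ee j) i * ut x i :=
      shift_sum Ω (fun y => ut (y - ee j) i * ut y i) hr (ee j) (ee_bound j)
    have hr0 : ∑ x ∈ bigS Ω, ut (x - ee j) i * ut x i = ∑ x ∈ Ω, ut (x - ee j) i * ut x i :=
      sum_S_eq Ω (fun y => ut (y - ee j) i * ut y i) hr
    have hptw : ∀ x : Pt, ut x i * D2 h j (fun y => ut y i) x
        = (-((ut (x + ee j) i - ut x i) ^ 2)) / h ^ 2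
          + ((ut (x + ee j) i ^ 2 - ut x i ^ 2)
             - (ut (x + ee j - ee j) i * ut (x + ee j) i - ut (x - ee j) i * ut x i)) / h ^ 2 := by
      intro x
      have a4 : x + ee j - ee j = x := by abel
      simp only [D2, a4]
      ring
    calc ∑ x ∈ bigS Ω, ut x i * D2 h j (fun y => ut y i) x
        = ∑ x ∈ bigS Ω, ((-((ut (x + ee j) i - ut x i) ^ 2)) / h ^ 2
          + ((ut (x + ee j) i ^ 2 - ut x i ^ 2)
             - (ut (x + ee j - ee j) i * ut (x + ee j) i - ut (x - ee j) i * ut x i)) / h ^ 2) :=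
          Finset.sum_congr rfl fun x _ => hptw x
      _ = (∑ x ∈ bigS Ω, (-((ut (x + ee j) i - ut x i) ^ 2)) / h ^ 2)
          + (((∑ x ∈ bigS Ω, ut (x + ee j) i ^ 2) - ∑ x ∈ bigS Ω, ut x i ^ 2)
             - ((∑ x ∈ bigS Ω, ut (x + ee j - ee j) i * ut (x + ee j) i)
                - ∑ x ∈ bigS Ω, ut (x - ee j) i * ut x i)) / h ^ 2 := by
          rw [Finset.sum_add_distrib]
          congr 1
          rw [← Finset.sum_div, Finset.sum_sub_distrib, Finset.sum_sub_distrib,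
            Finset.sum_sub_distrib]
      _ = ∑ x ∈ bigS Ω, (-((ut (x + ee j) i - ut x i) ^ 2)) / h ^ 2 := by
          rw [hq1, hq0, hr1, hr0]; simp
      _ ≤ 0 := Finset.sum_nonpos fun x _ =>
          div_nonpos_of_nonpos_of_nonneg (neg_nonpos.mpr (sq_nonneg _)) (sq_nonneg h)
  -- sum the equation over the big grid
  have Esum : ∑ x ∈ bigS Ω, ∑ i, ut x i * (ut x i - un x i)
      = τ * ∑ x ∈ bigS Ω, ∑ i, (ut x i *
          (-(1 / 2) * (∑ j, (un (x - ee j) j * Dc h j (fun y => ut y i) (x - ee j)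
              + un (x + ee j) j * Dc h j (fun y => ut y i) (x + ee j)))
           + (∑ j, D2 h j (fun y => ut y i) x) + f x i)) := by
    rw [Finset.mul_sum]
    refine Finset.sum_congr rfl fun x _ => ?_
    rw [Finset.mul_sum]
    exact Finset.sum_congr rfl fun i _ => hpt x i
  have hLHS : ∑ x ∈ bigS Ω, ∑ i, ut x i * (ut x i - un x i)
      = ∑ x ∈ Ω, ∑ i, ut x i * (ut x i - un x i) :=
    sum_S_eq Ω (fun x => ∑ i, ut x i * (ut x i - un x i))
      (fun x hx => Finset.sum_eq_zero fun i _ => by rw [hutΩ x hx i]; ring)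
  have hPQ : ∑ x ∈ Ω, ∑ i, ut x i * (ut x i - un x i)
      = (∑ x ∈ Ω, ∑ i, ut x i ^ 2) - ∑ x ∈ Ω, ∑ i, un x i * ut x i := by
    rw [← Finset.sum_sub_distrib]
    refine Finset.sum_congr rfl fun x _ => ?_
    rw [← Finset.sum_sub_distrib]
    exact Finset.sum_congr rfl fun i _ => by ring
  -- split the right-hand side
  have hsplit : ∑ x ∈ bigS Ω, ∑ i, (ut x i *
          (-(1 / 2) * (∑ j, (un (x - ee j) j * Dc h j (fun y => ut y i) (x - ee j)
              + un (x + ee j) j * Dc h j (fun y => ut y i) (x + ee j)))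
           + (∑ j, D2 h j (fun y => ut y i) x) + f x i))
      = (∑ x ∈ bigS Ω, ∑ i, ut x i *
          (-(1 / 2) * (∑ j, (un (x - ee j) j * Dc h j (fun y => ut y i) (x - ee j)
              + un (x + ee j) j * Dc h j (fun y => ut y i) (x + ee j)))))
        + (∑ x ∈ bigS Ω, ∑ i, ut x i * (∑ j, D2 h j (fun y => ut y i) x))
        + ∑ x ∈ bigS Ω, ∑ i, ut x i * f x i := by
    calc ∑ x ∈ bigS Ω, ∑ i, (ut x i *
          (-(1 / 2) * (∑ j, (un (x - ee j) j * Dc h j (fun y => ut y i) (x - ee j)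
              + un (x + ee j) j * Dc h j (fun y => ut y i) (x + ee j)))
           + (∑ j, D2 h j (fun y => ut y i) x) + f x i))
        = ∑ x ∈ bigS Ω, ∑ i, (ut x i *
            (-(1 / 2) * (∑ j, (un (x - ee j) j * Dc h j (fun y => ut y i) (x - ee j)
              + un (x + ee j) j * Dc h j (fun y => ut y i) (x + ee j))))
           + ut x i * (∑ j, D2 h j (fun y => ut y i) x) + ut x i * f x i) :=
          Finset.sum_congr rfl fun x _ => Finset.sum_congr rfl fun i _ => by ring
      _ = _ := by simp only [Finset.sum_add_distrib]
  -- the advection part of the sum is zero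
  have SA : ∑ x ∈ bigS Ω, ∑ i, ut x i *
      (-(1 / 2) * (∑ j, (un (x - ee j) j * Dc h j (fun y => ut y i) (x - ee j)
          + un (x + ee j) j * Dc h j (fun y => ut y i) (x + ee j)))) = 0 := by
    calc ∑ x ∈ bigS Ω, ∑ i, ut x i *
          (-(1 / 2) * (∑ j, (un (x - ee j) j * Dc h j (fun y => ut y i) (x - ee j)
              + un (x + ee j) j * Dc h j (fun y => ut y i) (x + ee j))))
        = ∑ x ∈ bigS Ω, ∑ i, ∑ j, (-(1 / 2) : ℝ) *
            (ut x i * (un (x - ee j) j * Dc h j (fun y => ut y i) (x - ee j)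
              + un (x + ee j) j * Dc h j (fun y => ut y i) (x + ee j))) := by
          refine Finset.sum_congr rfl fun x _ => Finset.sum_congr rfl fun i _ => ?_
          rw [show ut x i * (-(1 / 2) * (∑ j, (un (x - ee j) j * Dc h j (fun y => ut y i) (x - ee j)
              + un (x + ee j) j * Dc h j (fun y => ut y i) (x + ee j))))
            = (-(1 / 2) : ℝ) * (ut x i * ∑ j, (un (x - ee j) j * Dc h j (fun y => ut y i) (x - ee j)
              + un (x + ee j) j * Dc h j (fun y => ut y i) (x + ee j))) from by ring,
            Finset.mul_sum, Finset.mul_sum]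
      _ = ∑ i : Fin 3, ∑ x ∈ bigS Ω, ∑ j, (-(1 / 2) : ℝ) *
            (ut x i * (un (x - ee j) j * Dc h j (fun y => ut y i) (x - ee j)
              + un (x + ee j) j * Dc h j (fun y => ut y i) (x + ee j))) := Finset.sum_comm
      _ = ∑ i : Fin 3, ∑ j : Fin 3, ∑ x ∈ bigS Ω, (-(1 / 2) : ℝ) *
            (ut x i * (un (x - ee j) j * Dc h j (fun y => ut y i) (x - ee j)
              + un (x + ee j) j * Dc h j (fun y => ut y i) (x + ee j))) :=
          Finset.sum_congr rfl fun i _ => Finset.sum_comm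
      _ = 0 := by
          refine Finset.sum_eq_zero fun i _ => ?_
          have : ∑ j : Fin 3, ∑ x ∈ bigS Ω, (-(1 / 2) : ℝ) *
              (ut x i * (un (x - ee j) j * Dc h j (fun y => ut y i) (x - ee j)
                + un (x + ee j) j * Dc h j (fun y => ut y i) (x + ee j)))
              = (-(1 / 2) : ℝ) * ∑ j : Fin 3, ∑ x ∈ bigS Ω,
                (ut x i * (un (x - ee j) j * Dc h j (fun y => ut y i) (x - ee j)
                  + un (x + ee j) j * Dc h j (fun y => ut y i) (x + ee j))) := by
            rw [Finset.mul_sum]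
            exact Finset.sum_congr rfl fun j _ => (Finset.mul_sum _ _ _).symm
          rw [this, adv i, mul_zero]
  -- the diffusion part is nonpositive
  have SD : ∑ x ∈ bigS Ω, ∑ i, ut x i * (∑ j, D2 h j (fun y => ut y i) x) ≤ 0 := by
    calc ∑ x ∈ bigS Ω, ∑ i, ut x i * (∑ j, D2 h j (fun y => ut y i) x)
        = ∑ x ∈ bigS Ω, ∑ i, ∑ j, ut x i * D2 h j (fun y => ut y i) x :=
          Finset.sum_congr rfl fun x _ => Finset.sum_congr rfl fun i _ => Finset.mul_sum _ _ _
      _ = ∑ i : Fin 3, ∑ x ∈ bigS Ω, ∑ j, ut x i * D2 h j (fun y => ut y i) x := Finset.sum_comm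
      _ = ∑ i : Fin 3, ∑ j : Fin 3, ∑ x ∈ bigS Ω, ut x i * D2 h j (fun y => ut y i) x :=
          Finset.sum_congr rfl fun i _ => Finset.sum_comm
      _ ≤ 0 := Finset.sum_nonpos fun i _ => Finset.sum_nonpos fun j _ => diff i j
  have hTF : ∑ x ∈ bigS Ω, ∑ i, ut x i * f x i = ∑ x ∈ Ω, ∑ i, ut x i * f x i :=
    sum_S_eq Ω (fun x => ∑ i, ut x i * f x i)
      (fun x hx => Finset.sum_eq_zero fun i _ => by rw [hutΩ x hx i]; ring)
  -- the key energy inequality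
  have key : (∑ x ∈ Ω, ∑ i, ut x i ^ 2)
      ≤ (∑ x ∈ Ω, ∑ i, un x i * ut x i) + τ * ∑ x ∈ Ω, ∑ i, ut x i * f x i := by
    have h1 : (∑ x ∈ Ω, ∑ i, ut x i ^ 2) - (∑ x ∈ Ω, ∑ i, un x i * ut x i)
        = τ * ((∑ x ∈ bigS Ω, ∑ i, ut x i * (∑ j, D2 h j (fun y => ut y i) x))
            + ∑ x ∈ Ω, ∑ i, ut x i * f x i) := by
      rw [← hPQ, ← hLHS, Esum, hsplit, SA, zero_add, hTF]
    have h2 : τ * ((∑ x ∈ bigS Ω, ∑ i, ut x i * (∑ j, D2 h j (fun y => ut y i) x))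
            + ∑ x ∈ Ω, ∑ i, ut x i * f x i)
        ≤ τ * ∑ x ∈ Ω, ∑ i, ut x i * f x i := by
      apply mul_le_mul_of_nonneg_left _ hτ.le
      linarith [SD]
    linarith [h1, h2]
  -- Cauchy–Schwarz
  have hPnn : (0:ℝ) ≤ ∑ x ∈ Ω, ∑ i, ut x i ^ 2 :=
    Finset.sum_nonneg fun _ _ => Finset.sum_nonneg fun _ _ => sq_nonneg _
  have CS1 : (∑ x ∈ Ω, ∑ i, un x i * ut x i)
      ≤ Real.sqrt (∑ x ∈ Ω, ∑ i, un x i ^ 2) * Real.sqrt (∑ x ∈ Ω, ∑ i, ut x i ^ 2) :=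
    cs_helper Ω un ut
  have CS2 : (∑ x ∈ Ω, ∑ i, ut x i * f x i)
      ≤ Real.sqrt (∑ x ∈ Ω, ∑ i, f x i ^ 2) * Real.sqrt (∑ x ∈ Ω, ∑ i, ut x i ^ 2) := by
    have := cs_helper Ω f ut
    calc ∑ x ∈ Ω, ∑ i, ut x i * f x i = ∑ x ∈ Ω, ∑ i, f x i * ut x i :=
          Finset.sum_congr rfl fun x _ => Finset.sum_congr rfl fun i _ => by ring
      _ ≤ _ := this
  have hfin : Real.sqrt (∑ x ∈ Ω, ∑ i, ut x i ^ 2)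
      ≤ Real.sqrt (∑ x ∈ Ω, ∑ i, un x i ^ 2) + τ * Real.sqrt (∑ x ∈ Ω, ∑ i, f x i ^ 2) := by
    rcases eq_or_lt_of_le (Real.sqrt_nonneg (∑ x ∈ Ω, ∑ i, ut x i ^ 2)) with h0 | h0
    · rw [← h0]
      have := Real.sqrt_nonneg (∑ x ∈ Ω, ∑ i, un x i ^ 2)
      have := Real.sqrt_nonneg (∑ x ∈ Ω, ∑ i, f x i ^ 2)
      nlinarith
    · have hs : Real.sqrt (∑ x ∈ Ω, ∑ i, ut x i ^ 2) * Real.sqrt (∑ x ∈ Ω, ∑ i, ut x i ^ 2)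
          = ∑ x ∈ Ω, ∑ i, ut x i ^ 2 := Real.mul_self_sqrt hPnn
      have hQP : Real.sqrt (∑ x ∈ Ω, ∑ i, ut x i ^ 2) * Real.sqrt (∑ x ∈ Ω, ∑ i, ut x i ^ 2)
          ≤ (Real.sqrt (∑ x ∈ Ω, ∑ i, un x i ^ 2) + τ * Real.sqrt (∑ x ∈ Ω, ∑ i, f x i ^ 2))
            * Real.sqrt (∑ x ∈ Ω, ∑ i, ut x i ^ 2) := by
        rw [hs]
        have h3 : τ * (∑ x ∈ Ω, ∑ i, ut x i * f x i)
            ≤ τ * (Real.sqrt (∑ x ∈ Ω, ∑ i, f x i ^ 2) * Real.sqrt (∑ x ∈ Ω, ∑ i, ut x i ^ 2)) :=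
          mul_le_mul_of_nonneg_left CS2 hτ.le
        nlinarith [key, CS1]
      exact le_of_mul_le_mul_right hQP h0
  -- assemble: dnorm u = sqrt(Σ) * sqrt(h³)
  have dnorm_eq : ∀ u : Pt → Fin 3 → ℝ,
      dnorm h Ω u = Real.sqrt (∑ x ∈ Ω, ∑ i, u x i ^ 2) * Real.sqrt (h ^ 3) := by
    intro u
    rw [dnorm, ← Finset.sum_mul,
      Real.sqrt_mul (Finset.sum_nonneg fun _ _ => Finset.sum_nonneg fun _ _ => sq_nonneg _)]
  rw [dnorm_eq ut, dnorm_eq un, dnorm_eq f]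
  have hk : (0:ℝ) ≤ Real.sqrt (h ^ 3) := Real.sqrt_nonneg _
  calc Real.sqrt (∑ x ∈ Ω, ∑ i, ut x i ^ 2) * Real.sqrt (h ^ 3)
      ≤ (Real.sqrt (∑ x ∈ Ω, ∑ i, un x i ^ 2) + τ * Real.sqrt (∑ x ∈ Ω, ∑ i, f x i ^ 2))
          * Real.sqrt (h ^ 3) := mul_le_mul_of_nonneg_right hfin hk
    _ = _ := by ring
end

section
/- Let α, A > 0, τ = 1/T₁ with T₁ ∈ ℕ, and suppose a sequence (a_n)_{n≥0} of nonnegative reals satisfies a_{n+1} ≤ (1+3A⁻²τ)⁻¹(a_n + τ c_n) where ∑_{m=nT₁}^{(n+1)T₁-1} c_m² τ ≤ α² for all n. If a₀ ≤ R with R ≥ R₀ := α (1-e^{-A⁻²})⁻¹ ((1-e^{-2A⁻²})/(2A⁻²))^{1/2}, then a_{mT₁} ≤ R for all m ∈ ℕ. (Time-global boundedness of the discrete scheme.) -/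
open Finset Real

/-!
One block of `T₁` steps gives `a_{s+T₁} ≤ λ^{T₁} a_s + ∑_j λ^{T₁-j} τ c_{s+j}` with
`λ = (1 + 3A⁻²τ)⁻¹`, and Cauchy–Schwarz bounds the forcing term by `α (∑_j λ^{2(T₁-j)} τ)^{1/2}`.
That kernel sum is at most `(1 - λ^{T₁})² (1 - e^{-A⁻²})⁻² (1 - e^{-2A⁻²}) / (2A⁻²)`, so
`a_s ≤ R` implies `a_{s+T₁} ≤ λ^{T₁} R + (1 - λ^{T₁}) R₀ ≤ R`.
If `λ ≤ e^{-A⁻²τ}`, the kernel sum is dominated by a Riemann sum of `∫₀¹ e^{-2A⁻²(1-t)} dt` and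
`λ^{T₁} ≤ e^{-A⁻²}`. Otherwise the time step is coarse (`A⁻²τ ≥ 2/3`, so `λ ≤ 1/3`) and the whole
geometric series `∑_{k ≥ 1} λ^{2k} τ` is already small enough.
-/

lemma le_pow_mul_add_sum_of_le_mul_add {a b : ℕ → ℝ} {r : ℝ} (hr : 0 ≤ r)
    (h : ∀ n, a (n + 1) ≤ r * (a n + b n)) (s k : ℕ) :
    a (s + k) ≤ r ^ k * a s + ∑ j ∈ range k, r ^ (k - j) * b (s + j) := by
  induction k with
  | zero => simp
  | succ k ih =>
    have hshift : ∑ j ∈ range k, r ^ (k + 1 - j) * b (s + j)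
        = r * ∑ j ∈ range k, r ^ (k - j) * b (s + j) := by
      rw [mul_sum]
      refine sum_congr rfl fun j hj => ?_
      rw [Nat.sub_add_comm (mem_range.1 hj).le, pow_succ]
      ring
    calc a (s + (k + 1)) ≤ r * (a (s + k) + b (s + k)) := h (s + k)
      _ ≤ r * (r ^ k * a s + ∑ j ∈ range k, r ^ (k - j) * b (s + j) + b (s + k)) := by
        gcongr
      _ = r ^ (k + 1) * a s + ∑ j ∈ range (k + 1), r ^ (k + 1 - j) * b (s + j) := by
        rw [sum_range_succ, hshift, Nat.add_sub_cancel_left]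
        ring

lemma sum_mul_mul_le_sqrt_mul_sqrt {ι : Type*} (s : Finset ι) (w c : ι → ℝ) {τ : ℝ}
    (hτ : 0 ≤ τ) :
    ∑ i ∈ s, w i * (τ * c i) ≤ √(∑ i ∈ s, w i ^ 2 * τ) * √(∑ i ∈ s, c i ^ 2 * τ) := by
  have hcs := Real.sum_mul_le_sqrt_mul_sqrt s (fun i => w i * √τ) (fun i => c i * √τ)
  simp only [mul_pow, sq_sqrt hτ] at hcs
  convert hcs using 2 with i
  rw [mul_mul_mul_comm, mul_self_sqrt hτ]
  ring

lemma sum_range_pow_sub (r : ℝ) (T : ℕ) :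
    ∑ j ∈ range T, r ^ (T - j) = ∑ i ∈ range T, r ^ (i + 1) := by
  rw [← sum_range_reflect (fun i => r ^ (i + 1))]
  refine sum_congr rfl fun j hj => ?_
  rw [mem_range] at hj
  congr 1
  omega

/-- A right-endpoint Riemann sum of `∫₀ᵀ e^{-yt} dt`. -/
lemma sum_range_exp_neg_pow_succ_le {y : ℝ} (hy : 0 < y) (T : ℕ) :
    ∑ i ∈ range T, exp (-y) ^ (i + 1) ≤ (1 - exp (-y) ^ T) / y := by
  set q := exp (-y)
  have hq1 : q < 1 := exp_lt_one_iff.2 (by linarith)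
  have hyq : y * q ≤ 1 - q := by
    have h := mul_le_mul_of_nonneg_right (add_one_le_exp y) (exp_pos (-y)).le
    rw [← exp_add, add_neg_cancel, exp_zero] at h
    linarith
  have hqT : q ^ T ≤ 1 := pow_le_one₀ (exp_pos _).le hq1.le
  have h1q : 1 - q ≠ 0 := by linarith
  have hq1' : q - 1 ≠ 0 := by linarith
  calc ∑ i ∈ range T, q ^ (i + 1) = (1 - q ^ T) * (q / (1 - q)) := by
        simp_rw [pow_succ, ← sum_mul, geom_sum_eq hq1.ne]
        field_simp
        ring
    _ ≤ (1 - q ^ T) * (1 / y) := by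
        refine mul_le_mul_of_nonneg_left ?_ (by linarith)
        rw [div_le_div_iff₀ (by linarith) hy]
        linarith
    _ = (1 - q ^ T) / y := by ring

lemma one_sub_exp_neg_sq_le {B : ℝ} (hB : 0 ≤ B) : (1 - exp (-B)) ^ 2 ≤ 1 - exp (-2 * B) := by
  have h : exp (-2 * B) = exp (-B) ^ 2 := by rw [← exp_nat_mul]; ring_nf
  nlinarith [exp_pos (-B), exp_le_one_iff.2 (neg_nonpos.2 hB)]

lemma sum_sq_pow_mul_le_of_le_exp {B τ r : ℝ} {T : ℕ} (hB : 0 < B) (hT : 0 < T)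
    (hτ : τ = 1 / T) (hr0 : 0 ≤ r) (hr : r ≤ exp (-(B * τ))) :
    ∑ j ∈ range T, (r ^ (T - j)) ^ 2 * τ ≤ (1 - exp (-2 * B)) / (2 * B) := by
  have hτ0 : 0 < τ := by rw [hτ]; positivity
  have hr2 : r ^ 2 ≤ exp (-(2 * B * τ)) := by
    calc r ^ 2 ≤ exp (-(B * τ)) ^ 2 := by gcongr
      _ = exp (-(2 * B * τ)) := by rw [← exp_nat_mul]; ring_nf
  have hT' : exp (-(2 * B * τ)) ^ T = exp (-2 * B) := by
    rw [← exp_nat_mul, hτ]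
    field_simp
  calc ∑ j ∈ range T, (r ^ (T - j)) ^ 2 * τ
      ≤ ∑ j ∈ range T, exp (-(2 * B * τ)) ^ (T - j) * τ := by
        gcongr with j
        rw [← pow_mul, mul_comm, pow_mul]
        gcongr
    _ = (∑ i ∈ range T, exp (-(2 * B * τ)) ^ (i + 1)) * τ := by
        rw [← sum_mul, sum_range_pow_sub]
    _ ≤ (1 - exp (-(2 * B * τ)) ^ T) / (2 * B * τ) * τ := by
        gcongr
        exact sum_range_exp_neg_pow_succ_le (by positivity) T
    _ = (1 - exp (-2 * B)) / (2 * B) := by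
        rw [hT']
        field_simp

lemma sum_sq_pow_mul_le_of_two_thirds_le {B τ : ℝ} (T : ℕ) (hB : 0 < B) (hτ : 0 < τ)
    (hx : 2 / 3 ≤ B * τ) :
    ∑ j ∈ range T, ((1 + 3 * B * τ)⁻¹ ^ (T - j)) ^ 2 * τ ≤
      (1 - (1 + 3 * B * τ)⁻¹) ^ 2 / (2 * B) := by
  set r := (1 + 3 * B * τ)⁻¹
  have hr0 : 0 < r := by positivity
  have hr : r * (1 + 3 * B * τ) = 1 := inv_mul_cancel₀ (by positivity)
  clear_value r
  have hr3 : r ≤ 1 / 3 := by nlinarith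
  have hr2 : r ^ 2 < 1 := by nlinarith
  calc ∑ j ∈ range T, (r ^ (T - j)) ^ 2 * τ
      = r ^ 2 * (∑ i ∈ Ico 0 T, (r ^ 2) ^ i) * τ := by
        simp_rw [← pow_mul, mul_comm _ 2, pow_mul, ← sum_mul, sum_range_pow_sub, pow_succ,
          ← sum_mul, range_eq_Ico]
        ring
    _ ≤ r ^ 2 * (1 / (1 - r ^ 2)) * τ := by
        gcongr
        simpa using geom_sum_Ico_le_of_lt_one (sq_nonneg r) hr2 (m := 0) (n := T)
    _ = r ^ 2 * τ / (1 - r ^ 2) := by ring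
    _ ≤ (1 - r) ^ 2 / (2 * B) := by
        rw [div_le_div_iff₀ (by linarith) (by positivity)]
        have h1r : 1 - r = 3 * (B * τ) * r := by linear_combination -hr
        have h9 : 2 ≤ 9 * (B * τ) * (1 - r ^ 2) := by nlinarith
        calc r ^ 2 * τ * (2 * B) = B * τ * r ^ 2 * 2 := by ring
          _ ≤ B * τ * r ^ 2 * (9 * (B * τ) * (1 - r ^ 2)) := by gcongr
          _ = (1 - r) ^ 2 * (1 - r ^ 2) := by rw [h1r]; ring

lemma sqrt_sum_sq_pow_mul_le {B τ : ℝ} {T : ℕ} (hB : 0 < B) (hT : 0 < T) (hτ : τ = 1 / T) :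
    √(∑ j ∈ range T, ((1 + 3 * B * τ)⁻¹ ^ (T - j)) ^ 2 * τ) ≤
      (1 - (1 + 3 * B * τ)⁻¹ ^ T) * ((1 - exp (-B))⁻¹ * √((1 - exp (-2 * B)) / (2 * B))) := by
  have hτ0 : 0 < τ := by rw [hτ]; positivity
  set r := (1 + 3 * B * τ)⁻¹
  have hr0 : 0 < r := by positivity
  have hr1 : r ≤ 1 := inv_le_one_of_one_le₀ (by nlinarith [mul_pos hB hτ0])
  have heB : 0 < 1 - exp (-B) := by linarith [exp_lt_one_iff.2 (neg_lt_zero.2 hB)]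
  have hS : 0 ≤ (1 - exp (-2 * B)) / (2 * B) :=
    div_nonneg (by linarith [exp_le_one_iff.2 (by linarith : -2 * B ≤ 0)]) (by positivity)
  have hfactor : 0 ≤ (1 - r ^ T) * (1 - exp (-B))⁻¹ :=
    mul_nonneg (by linarith [pow_le_one₀ hr0.le hr1 (n := T)]) (inv_nonneg.2 heB.le)
  rw [← mul_assoc, ← sqrt_sq hfactor, ← sqrt_mul (sq_nonneg _)]
  apply sqrt_le_sqrt
  by_cases hr : r ≤ exp (-(B * τ))
  · have hrT : r ^ T ≤ exp (-B) := by
      calc r ^ T ≤ exp (-(B * τ)) ^ T := by gcongr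
        _ = exp (-B) := by rw [← exp_nat_mul, hτ]; field_simp
    have h1 : 1 ≤ (1 - r ^ T) * (1 - exp (-B))⁻¹ := by
      rw [le_mul_inv_iff₀ heB]
      linarith
    calc _ ≤ (1 - exp (-2 * B)) / (2 * B) := sum_sq_pow_mul_le_of_le_exp hB hT hτ hr0.le hr
      _ ≤ ((1 - r ^ T) * (1 - exp (-B))⁻¹) ^ 2 * ((1 - exp (-2 * B)) / (2 * B)) :=
        le_mul_of_one_le_left hS (one_le_pow₀ h1)
  · -- A coarse time step: `1 - Bτ ≤ e^{-Bτ} < (1 + 3Bτ)⁻¹` forces `Bτ > 2/3`.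
    have hx : 2 / 3 ≤ B * τ := by
      have h := (one_sub_le_exp_neg (B * τ)).trans (not_le.1 hr).le
      have hr' : r * (1 + 3 * B * τ) = 1 := inv_mul_cancel₀ (by positivity)
      nlinarith [mul_le_mul_of_nonneg_right h (by positivity : (0 : ℝ) ≤ 1 + 3 * B * τ),
        mul_pos hB hτ0]
    have hrT : (1 - r) ^ 2 ≤ (1 - r ^ T) ^ 2 := by
      gcongr
      exact pow_le_of_le_one hr0.le hr1 hT.ne'
    calc _ ≤ (1 - r) ^ 2 / (2 * B) := sum_sq_pow_mul_le_of_two_thirds_le T hB hτ0 hx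
      _ = (1 - r) ^ 2 * (1 - exp (-B))⁻¹ ^ 2 * ((1 - exp (-B)) ^ 2 / (2 * B)) := by
        field_simp
      _ ≤ (1 - r ^ T) ^ 2 * (1 - exp (-B))⁻¹ ^ 2 * ((1 - exp (-2 * B)) / (2 * B)) := by
        gcongr
        exact one_sub_exp_neg_sq_le hB.le
      _ = _ := by ring

lemma sum_pow_sub_mul_le_one_sub_pow_mul {B τ α R : ℝ} {T : ℕ} {c : ℕ → ℝ} (hB : 0 < B)
    (hT : 0 < T) (hτ : τ = 1 / T) (hα : 0 ≤ α) (hc : ∑ j ∈ range T, c j ^ 2 * τ ≤ α ^ 2)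
    (hR : α * (1 - exp (-B))⁻¹ * √((1 - exp (-2 * B)) / (2 * B)) ≤ R) :
    ∑ j ∈ range T, (1 + 3 * B * τ)⁻¹ ^ (T - j) * (τ * c j) ≤
      (1 - (1 + 3 * B * τ)⁻¹ ^ T) * R := by
  have hτ0 : 0 ≤ τ := by rw [hτ]; positivity
  have hkernel := sqrt_sum_sq_pow_mul_le hB hT hτ
  set r := (1 + 3 * B * τ)⁻¹
  have hrT : r ^ T ≤ 1 :=
    pow_le_one₀ (by positivity) (inv_le_one_of_one_le₀ (le_add_of_nonneg_right (by positivity)))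
  calc _ ≤ √(∑ j ∈ range T, (r ^ (T - j)) ^ 2 * τ) * α := by
        refine (sum_mul_mul_le_sqrt_mul_sqrt _ _ _ hτ0).trans ?_
        gcongr
        exact sqrt_le_iff.2 ⟨hα, hc⟩
    _ ≤ (1 - r ^ T) * ((1 - exp (-B))⁻¹ * √((1 - exp (-2 * B)) / (2 * B))) * α := by
        gcongr
    _ = (1 - r ^ T) * (α * (1 - exp (-B))⁻¹ * √((1 - exp (-2 * B)) / (2 * B))) := by ring
    _ ≤ (1 - r ^ T) * R := mul_le_mul_of_nonneg_left hR (sub_nonneg.2 hrT)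

theorem time_global_boundedness_general (α A R τ : ℝ) (T₁ : ℕ)
    (hα : 0 < α) (hA : 0 < A) (hT₁ : 0 < T₁) (hτ : τ = 1 / (T₁ : ℝ))
    (a c : ℕ → ℝ)
    (hrec : ∀ n, a (n + 1) ≤ (1 + 3 * (A⁻¹) ^ 2 * τ)⁻¹ * (a n + τ * c n))
    (hforce : ∀ n : ℕ, ∑ m ∈ Finset.Ico (n * T₁) ((n + 1) * T₁), (c m) ^ 2 * τ ≤ α ^ 2)
    (hR : R ≥ α * (1 - Real.exp (-(A⁻¹) ^ 2))⁻¹ *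
      Real.sqrt ((1 - Real.exp (-2 * (A⁻¹) ^ 2)) / (2 * (A⁻¹) ^ 2)))
    (ha0 : a 0 ≤ R) :
    ∀ m : ℕ, a (m * T₁) ≤ R := by
  have hB : 0 < (A⁻¹) ^ 2 := by positivity
  have hr0 : 0 ≤ (1 + 3 * (A⁻¹) ^ 2 * τ)⁻¹ := by rw [hτ]; positivity
  set r := (1 + 3 * (A⁻¹) ^ 2 * τ)⁻¹
  have hblock : ∀ n, a (n * T₁) ≤ R → a ((n + 1) * T₁) ≤ R := by
    intro n hn
    have hforce_n := hforce n
    rw [sum_Ico_eq_sum_range, add_one_mul, Nat.add_sub_cancel_left] at hforce_n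
    calc a ((n + 1) * T₁) = a (n * T₁ + T₁) := by rw [add_one_mul]
      _ ≤ r ^ T₁ * a (n * T₁) + ∑ j ∈ range T₁, r ^ (T₁ - j) * (τ * c (n * T₁ + j)) :=
        le_pow_mul_add_sum_of_le_mul_add hr0 hrec _ _
      _ ≤ r ^ T₁ * R + (1 - r ^ T₁) * R := by
        gcongr
        exact sum_pow_sub_mul_le_one_sub_pow_mul hB hT₁ hτ hα.le hforce_n hR
      _ = R := by ring
  intro m
  induction m with
  | zero => simpa using ha0
  | succ m ih => exact hblock m ih

/-- Abstract recurrence behind **time-global solvability** (Theorem 2.11):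
if `a_{n+1} ≤ (1+3A⁻²τ)⁻¹(a_n + τ c_n)`, the forcing satisfies
`∑_{m=nT₁}^{(n+1)T₁-1} c_m² τ ≤ α²`, and `a₀ ≤ R` with
`R ≥ R₀ = α(1-e^{-A⁻²})⁻¹ ((1-e^{-2A⁻²})/(2A⁻²))^{1/2}`, then `a_{mT₁} ≤ R` for all `m`. -/
theorem time_global_boundedness (α A R τ : ℝ) (T₁ : ℕ)
    (hα : 0 < α) (hA : 0 < A) (hT₁ : 0 < T₁) (hτ : τ = 1 / (T₁ : ℝ))
    (a c : ℕ → ℝ) (ha : ∀ n, 0 ≤ a n) (hc : ∀ n, 0 ≤ c n)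
    (hrec : ∀ n, a (n + 1) ≤ (1 + 3 * (A⁻¹) ^ 2 * τ)⁻¹ * (a n + τ * c n))
    (hforce : ∀ n : ℕ, ∑ m ∈ Finset.Ico (n * T₁) ((n + 1) * T₁), (c m) ^ 2 * τ ≤ α ^ 2)
    (hR : R ≥ α * (1 - Real.exp (-(A⁻¹) ^ 2))⁻¹ *
      Real.sqrt ((1 - Real.exp (-2 * (A⁻¹) ^ 2)) / (2 * (A⁻¹) ^ 2)))
    (ha0 : a 0 ≤ R) :
    ∀ m : ℕ, a (m * T₁) ≤ R :=
  time_global_boundedness_general α A R τ T₁ hα hA hT₁ hτ a c hrec hforce hR ha0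
end

section
/- Let β₁, β₃, β₄, A > 0 and η := max{2β₃/β₁, Aβ₄}. Suppose nonnegative sequences b_n satisfy b₀ ≤ η h^{1/4} and the recurrence b_{n+1} ≤ (1+β₁τ)b_n + β₂τh^{3/4}/b_{n+1} + β₃τh^{1/4} - τ S_{n+1}(A⁻¹ - β₄h^{1/4}/b_{n+1}) with S_{n+1} ≥ 0, for 0 ≤ n < T/τ. Then for all sufficiently small h (with τ comparable to h^{3/4}), b_n ≤ η(1+2β₁τ)^n h^{1/4} ≤ η e^{2β₁T} h^{1/4} for all 0 ≤ n ≤ T/τ. -/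
open Real

set_option maxHeartbeats 1000000 in
/-- Abstract induction behind the **L² error estimate of order `h^{1/4}`**
(Theorem 3.1): under the scaling `τ = θ h^{3/4}`, `θ ∈ [θ₀, θ₁]`, if `b₀ ≤ η h^{1/4}`
and the energy recurrence holds up to time `T`, then
`b_n ≤ η(1+2β₁τ)^n h^{1/4} ≤ η e^{2β₁T} h^{1/4}` for all `n ≤ T/τ`, with
`η = max{2β₃/β₁, Aβ₄}`, for all sufficiently small `h`. -/
theorem error_estimate_induction (β₁ β₂ β₃ β₄ A T θ₀ θ₁ : ℝ)
    (hβ₁ : 0 < β₁) (hβ₂ : 0 < β₂) (hβ₃ : 0 < β₃) (hβ₄ : 0 < β₄)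
    (hA : 0 < A) (hT : 0 < T) (hθ₀ : 0 < θ₀) (hθ₁ : θ₀ ≤ θ₁)
    (η : ℝ) (hη : η = max (2 * β₃ / β₁) (A * β₄)) :
    ∃ h₀ > (0 : ℝ), ∀ h : ℝ, 0 < h → h ≤ h₀ →
      ∀ θ : ℝ, θ₀ ≤ θ → θ ≤ θ₁ →
      ∀ τ : ℝ, τ = θ * h ^ ((3 : ℝ) / 4) →
      ∀ b S : ℕ → ℝ, (∀ n, 0 ≤ b n) → (∀ n, 0 ≤ S n) →
      b 0 ≤ η * h ^ ((1 : ℝ) / 4) →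
      (∀ n : ℕ, ((n : ℝ) + 1) ≤ T / τ →
        b (n + 1) ≤ (1 + β₁ * τ) * b n + β₂ * τ * h ^ ((3 : ℝ) / 4) / b (n + 1)
          + β₃ * τ * h ^ ((1 : ℝ) / 4)
          - τ * S (n + 1) * (A⁻¹ - β₄ * h ^ ((1 : ℝ) / 4) / b (n + 1))) →
      ∀ n : ℕ, (n : ℝ) ≤ T / τ →
        b n ≤ η * (1 + 2 * β₁ * τ) ^ n * h ^ ((1 : ℝ) / 4) ∧
        η * (1 + 2 * β₁ * τ) ^ n * h ^ ((1 : ℝ) / 4)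
          ≤ η * Real.exp (2 * β₁ * T) * h ^ ((1 : ℝ) / 4) := by
  have hη0 : 0 < η := by
    rw [hη]; exact lt_max_of_lt_right (mul_pos hA hβ₄)
  have hη1 : 2 * β₃ ≤ β₁ * η := by
    have := le_max_left (2 * β₃ / β₁) (A * β₄)
    rw [← hη] at this
    rw [div_le_iff₀ hβ₁] at this
    linarith
  have hη2 : A * β₄ ≤ η := by rw [hη]; exact le_max_right _ _
  refine ⟨(β₃ * η / β₂) ^ 4, by positivity, ?_⟩
  intro h hh hh0 θ hθl hθu τ hτ b S hb hS hb0 hrec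
  set x := h ^ ((1 : ℝ) / 4) with hxdef
  have hx : 0 < x := Real.rpow_pos_of_pos hh _
  have hx3 : h ^ ((3 : ℝ) / 4) = x ^ 3 := by
    rw [hxdef, ← Real.rpow_natCast (h ^ ((1 : ℝ) / 4)) 3, ← Real.rpow_mul hh.le]
    norm_num
  have hτ0 : 0 < τ := by
    rw [hτ]
    exact mul_pos (lt_of_lt_of_le hθ₀ hθl) (Real.rpow_pos_of_pos hh _)
  -- smallness of h : β₂ x ≤ β₃ η
  have hxb : β₂ * x ≤ β₃ * η := by
    have hc0 : (0 : ℝ) ≤ β₃ * η / β₂ := by positivity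
    have : x ≤ β₃ * η / β₂ := by
      rw [hxdef]
      calc h ^ ((1 : ℝ) / 4) ≤ ((β₃ * η / β₂) ^ 4) ^ ((1 : ℝ) / 4) :=
            Real.rpow_le_rpow hh.le hh0 (by norm_num)
        _ = β₃ * η / β₂ := by
            rw [← Real.rpow_natCast (β₃ * η / β₂) 4, ← Real.rpow_mul hc0]
            norm_num
    rw [le_div_iff₀ hβ₂] at this
    linarith
  have hp : (1 : ℝ) ≤ 1 + 2 * β₁ * τ := by nlinarith
  -- main induction
  have main : ∀ n : ℕ, (n : ℝ) ≤ T / τ → b n ≤ η * (1 + 2 * β₁ * τ) ^ n * x := by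
    intro n
    induction n with
    | zero => intro _; simpa using hb0
    | succ n ih =>
      intro hn1
      have hn : (n : ℝ) ≤ T / τ := by push_cast at hn1 ⊢; linarith
      have IH := ih hn
      set P := (1 + 2 * β₁ * τ) ^ n with hP
      have hP1 : 1 ≤ P := one_le_pow₀ hp
      have hsucc : (1 + 2 * β₁ * τ) ^ (n + 1) = (1 + 2 * β₁ * τ) * P := by
        rw [hP, pow_succ]; ring
      rw [hsucc]
      clear_value P
      by_contra hc
      push_neg at hc
      have hβτ : 0 < β₁ * τ := mul_pos hβ₁ hτ0
      have hBge : η * x ≤ η * P * x := by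
        nlinarith [mul_nonneg (mul_nonneg hη0.le (sub_nonneg.mpr hP1)) hx.le]
      have hbx : η * x < b (n + 1) := by
        nlinarith [mul_nonneg (mul_nonneg (mul_nonneg
          (by linarith : (0:ℝ) ≤ 2 * β₁ * τ) hη0.le)
          (by linarith : (0:ℝ) ≤ P)) hx.le]
      have hbpos : 0 < b (n + 1) := lt_trans (by positivity) hbx
      -- the S-term is nonpositive
      have hA1 : β₄ * x / b (n + 1) ≤ A⁻¹ := by
        rw [div_le_iff₀ hbpos]
        have h1 : A * β₄ * x ≤ b (n + 1) := by
          have := mul_le_mul_of_nonneg_right hη2 hx.le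
          linarith
        have h2 : A⁻¹ * (A * β₄ * x) ≤ A⁻¹ * b (n + 1) :=
          mul_le_mul_of_nonneg_left h1 (by positivity)
        calc β₄ * x = A⁻¹ * (A * β₄ * x) := by field_simp
          _ ≤ A⁻¹ * b (n + 1) := h2
      have hSdrop : 0 ≤ τ * S (n + 1) * (A⁻¹ - β₄ * x / b (n + 1)) :=
        mul_nonneg (mul_nonneg hτ0.le (hS _)) (by linarith)
      -- the quadratic term
      have hdiv : β₂ * τ * x ^ 3 / b (n + 1) ≤ β₃ * τ * x := by
        rw [div_le_iff₀ hbpos]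
        calc β₂ * τ * x ^ 3 = β₂ * x * (τ * x ^ 2) := by ring
          _ ≤ β₃ * η * (τ * x ^ 2) :=
              mul_le_mul_of_nonneg_right hxb (by positivity)
          _ = β₃ * τ * x * (η * x) := by ring
          _ ≤ β₃ * τ * x * b (n + 1) :=
              mul_le_mul_of_nonneg_left hbx.le (by positivity)
      have hrecn := hrec n (by exact_mod_cast hn1)
      rw [hx3] at hrecn
      have hmul : (1 + β₁ * τ) * b n ≤ (1 + β₁ * τ) * (η * P * x) :=
        mul_le_mul_of_nonneg_left IH (by linarith)
      have hlast : 2 * (β₃ * τ * x) ≤ β₁ * τ * (η * P * x) := by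
        calc 2 * (β₃ * τ * x) = 2 * β₃ * (τ * x) := by ring
          _ ≤ β₁ * η * (τ * x) := mul_le_mul_of_nonneg_right hη1 (by positivity)
          _ = β₁ * τ * (η * x) := by ring
          _ ≤ β₁ * τ * (η * P * x) :=
              mul_le_mul_of_nonneg_left hBge (by positivity)
      have hexp : η * ((1 + 2 * β₁ * τ) * P) * x
          = (1 + β₁ * τ) * (η * P * x) + β₁ * τ * (η * P * x) := by ring
      linarith
  intro n hn
  refine ⟨main n hn, ?_⟩
  have hpow : (1 + 2 * β₁ * τ) ^ n ≤ Real.exp (2 * β₁ * T) := by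
    calc (1 + 2 * β₁ * τ) ^ n ≤ (Real.exp (2 * β₁ * τ)) ^ n := by
          apply pow_le_pow_left₀ (by linarith)
          linarith [Real.add_one_le_exp (2 * β₁ * τ)]
      _ = Real.exp ((n : ℝ) * (2 * β₁ * τ)) := by rw [← Real.exp_nat_mul]
      _ ≤ Real.exp (2 * β₁ * T) := by
          apply Real.exp_le_exp.mpr
          have : (n : ℝ) * τ ≤ T := by
            rw [le_div_iff₀ hτ0] at hn; linarith
          nlinarith
  have := mul_le_mul_of_nonneg_right
    (mul_le_mul_of_nonneg_left hpow hη0.le) hx.le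
  linarith
end
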